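/- arXiv:2503.21151 — 12 statements merged into one kernel-verified Lean document; each statement's English description precedes it below -/
import Mathlib

section
/- For a positive integer n, there exists a finite set S of rational numbers with |S| = n, closed under negation (x ∈ S implies −x ∈ S), and satisfying Σ_{x∈S} x² = n/2, if and only if n ∉ {1, 2, 3, 7}. -/
/-!
Let `P` be the positive part of a negation-closed `S ⊆ ℚ`; then `S = P ∪ -P`, plus `0` when `|S|` is
odd, so the design condition reads `|P| = ⌊n/2⌋` and `4 ∑_{x ∈ P} x² = n`.
For `n = 1` the sum is empty. For `n = 7`, and for `n = 2, 3` after adding `2² + 1²`,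
resp. `2² + 0²`, it writes `7` as a sum of three rational squares, which is impossible: clearing
denominators, squares are `0, 1, 4` mod 8 and a 2-adic descent applies.
Conversely, the unit circle has infinitely many rational points `(x, y)` with `0 < x < y`, so one
can keep adding two new elements with `x² + y² = 1` to one of the seeds `∅`, `{1/2, 1}`,
`{1/6, 1/3, 7/6}` or their union (squares summing to `0, 5/4, 3/2, 11/4`), which reaches every
`n ∉ {1, 2, 3, 7}` in each residue class mod 4.
-/

open Finset

theorem sq_mod_eight (a : ℕ) : (a % 2 = 0 ∧ a ^ 2 % 4 = 0) ∨ (a % 2 = 1 ∧ a ^ 2 % 8 = 1) := by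
  have := Nat.pow_mod a 2 8
  have : a % 8 < 8 := Nat.mod_lt a (by norm_num)
  interval_cases h : a % 8 <;> omega

theorem eq_zero_of_sq_add_sq_add_sq_eq_seven_mul_sq {a b c d : ℕ}
    (h : a ^ 2 + b ^ 2 + c ^ 2 = 7 * d ^ 2) : d = 0 := by
  induction d using Nat.strong_induction_on generalizing a b c with
  | _ d ih =>
  -- Squares are `0, 1, 4` mod 8, so `7 * d ^ 2` (`≡ 7` if `d` is odd) forces everything even.
  have := sq_mod_eight a
  have := sq_mod_eight b
  have := sq_mod_eight c
  have := sq_mod_eight d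
  obtain ⟨⟨a, rfl⟩, ⟨b, rfl⟩, ⟨c, rfl⟩, ⟨d, rfl⟩⟩ : 2 ∣ a ∧ 2 ∣ b ∧ 2 ∣ c ∧ 2 ∣ d := by omega
  obtain rfl | hd := Nat.eq_zero_or_pos d
  · rfl
  exact absurd (ih d (by omega) (by linarith : a ^ 2 + b ^ 2 + c ^ 2 = 7 * d ^ 2)) hd.ne'

theorem sq_add_sq_add_sq_ne_seven (x y z : ℚ) : x ^ 2 + y ^ 2 + z ^ 2 ≠ 7 := by
  intro h
  have key : (x.num * y.den * z.den).natAbs ^ 2 + (y.num * x.den * z.den).natAbs ^ 2 +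
      (z.num * x.den * y.den).natAbs ^ 2 = 7 * (x.den * y.den * z.den) ^ 2 := by
    have hq : ((x.num * y.den * z.den : ℤ) : ℚ) ^ 2 + ((y.num * x.den * z.den : ℤ) : ℚ) ^ 2 +
        ((z.num * x.den * y.den : ℤ) : ℚ) ^ 2 = 7 * ((x.den * y.den * z.den : ℕ) : ℚ) ^ 2 := by
      push_cast
      rw [← Rat.mul_den_eq_num x, ← Rat.mul_den_eq_num y, ← Rat.mul_den_eq_num z]
      linear_combination ((x.den : ℚ) * y.den * z.den) ^ 2 * h
    zify
    simp only [sq_abs]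
    exact_mod_cast hq
  have hden := eq_zero_of_sq_add_sq_add_sq_eq_seven_mul_sq key
  simp [x.den_nz, y.den_nz, z.den_nz] at hden

open scoped Pointwise

theorem neg_mem_union_neg {α : Type*} [DecidableEq α] [InvolutiveNeg α] (P : Finset α) :
    ∀ x ∈ P ∪ -P, -x ∈ P ∪ -P := by
  simp [mem_neg', or_comm]

theorem neg_mem_insert_zero {α : Type*} [DecidableEq α] [NegZeroClass α] {S : Finset α}
    (hS : ∀ x ∈ S, -x ∈ S) : ∀ x ∈ insert 0 S, -x ∈ insert 0 S := by
  intro x hx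
  rcases mem_insert.1 hx with rfl | hx
  · simp
  · exact mem_insert_of_mem (hS x hx)

section Antipodal

variable {G : Type*} [AddCommGroup G] [LinearOrder G] [IsOrderedAddMonoid G]

theorem sum_eq_sum_pos_add_of_neg_mem {M : Type*} [AddCommMonoid M] {S : Finset G}
    (hS : ∀ x ∈ S, -x ∈ S) (f : G → M) :
    ∑ x ∈ S, f x = ∑ x ∈ S with 0 < x, (f x + f (-x)) + if (0 : G) ∈ S then f 0 else 0 := by
  have hneg : ∑ x ∈ S with x < 0, f x = ∑ x ∈ S with 0 < x, f (-x) :=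
    sum_nbij' (fun x ↦ -x) (fun x ↦ -x) (by simp +contextual [hS]) (by simp +contextual [hS])
      (by simp) (by simp) (by simp)
  have hzero : ∑ x ∈ S with x = 0, f x = if (0 : G) ∈ S then f 0 else 0 := by
    rw [filter_eq']; split_ifs <;> simp
  rw [sum_add_distrib, ← hneg, ← hzero, ← sum_filter_add_sum_filter_not S (0 < ·),
    ← sum_filter_add_sum_filter_not (S.filter (¬ 0 < ·)) (· < 0)]
  simp only [filter_filter, not_lt]
  rw [add_assoc]
  congr 3 <;> refine filter_congr fun x _ ↦ ?_
  · exact and_iff_right_of_imp le_of_lt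
  · exact le_antisymm_iff.symm

theorem card_eq_of_neg_mem {S : Finset G} (hS : ∀ x ∈ S, -x ∈ S) :
    #S = 2 * #{x ∈ S | 0 < x} + if (0 : G) ∈ S then 1 else 0 := by
  rw [card_eq_sum_ones, sum_eq_sum_pos_add_of_neg_mem hS, sum_const, smul_eq_mul, mul_comm]

theorem filter_pos_union_neg {P : Finset G} (hP : ∀ x ∈ P, 0 < x) : {x ∈ P ∪ -P | 0 < x} = P := by
  ext x
  simp only [mem_filter, mem_union, mem_neg']
  exact ⟨fun ⟨hx, hx0⟩ ↦ hx.resolve_right fun h ↦ (hP _ h).not_gt (neg_neg_of_pos hx0),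
    fun hx ↦ ⟨.inl hx, hP x hx⟩⟩

end Antipodal

section AntipodalSumSq

variable {R : Type*} [Ring R] [LinearOrder R] [IsOrderedRing R]

theorem sum_sq_eq_of_neg_mem {S : Finset R} (hS : ∀ x ∈ S, -x ∈ S) :
    ∑ x ∈ S, x ^ 2 = 2 * ∑ x ∈ S with 0 < x, x ^ 2 := by
  rw [sum_eq_sum_pos_add_of_neg_mem hS, mul_sum]
  simp [two_mul]

theorem exists_finset_neg_mem_iff_exists_pos (n : ℕ) (q : R) :
    (∃ S : Finset R, #S = n ∧ (∀ x ∈ S, -x ∈ S) ∧ ∑ x ∈ S, x ^ 2 = q) ↔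
      ∃ P : Finset R, (∀ x ∈ P, 0 < x) ∧ #P = n / 2 ∧ 2 * ∑ x ∈ P, x ^ 2 = q := by
  constructor
  · rintro ⟨S, rfl, hS, rfl⟩
    refine ⟨{x ∈ S | 0 < x}, fun x hx ↦ (mem_filter.1 hx).2, ?_, (sum_sq_eq_of_neg_mem hS).symm⟩
    rw [card_eq_of_neg_mem hS]
    split_ifs <;> omega
  · rintro ⟨P, hP, hcard, rfl⟩
    obtain ⟨S, hS, hfilter, hcardS⟩ :
        ∃ S : Finset R, (∀ x ∈ S, -x ∈ S) ∧ {x ∈ S | 0 < x} = P ∧ #S = n := by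
      have h0 : (0 : R) ∉ P ∪ -P := by simpa [mem_neg'] using fun h ↦ (hP 0 h).false
      rcases Nat.mod_two_eq_zero_or_one n with hn | hn
      · refine ⟨P ∪ -P, neg_mem_union_neg P, filter_pos_union_neg hP, ?_⟩
        rw [card_eq_of_neg_mem (neg_mem_union_neg P), filter_pos_union_neg hP, if_neg h0]
        omega
      · have hS := neg_mem_insert_zero (neg_mem_union_neg P)
        have hfilter : {x ∈ insert 0 (P ∪ -P) | 0 < x} = P := by
          rw [filter_insert, if_neg (lt_irrefl 0), filter_pos_union_neg hP]
        refine ⟨_, hS, hfilter, ?_⟩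
        rw [card_eq_of_neg_mem hS, hfilter, if_pos (mem_insert_self _ _)]
        omega
    exact ⟨S, hcardS, hS, by rw [sum_sq_eq_of_neg_mem hS, hfilter]⟩

end AntipodalSumSq

section UnitCircle

variable {K : Type*} [Field K] [LinearOrder K] [IsStrictOrderedRing K]

-- Euclid's formula with generators `k + 2 > k + 1`:
-- the Pythagorean triple `(2k + 3, 2(k + 1)(k + 2), (k + 1)² + (k + 2)²)`.
def unitCircleX (k : ℕ) : K := (2 * k + 3) / ((k + 1) ^ 2 + (k + 2) ^ 2)

def unitCircleY (k : ℕ) : K := 2 * (k + 1) * (k + 2) / ((k + 1) ^ 2 + (k + 2) ^ 2)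

theorem unitCircleX_pos (k : ℕ) : 0 < (unitCircleX k : K) := by
  unfold unitCircleX; positivity

theorem unitCircleY_pos (k : ℕ) : 0 < (unitCircleY k : K) := by
  unfold unitCircleY; positivity

theorem unitCircleX_lt_unitCircleY (k : ℕ) : (unitCircleX k : K) < unitCircleY k := by
  unfold unitCircleX unitCircleY
  gcongr
  nlinarith [(k.cast_nonneg : (0 : K) ≤ k)]

theorem unitCircleX_sq_add_unitCircleY_sq (k : ℕ) :
    (unitCircleX k : K) ^ 2 + unitCircleY k ^ 2 = 1 := by
  unfold unitCircleX unitCircleY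
  field_simp
  ring

theorem unitCircleY_strictMono : StrictMono (unitCircleY : ℕ → K) := by
  refine strictMono_nat_of_lt_succ fun k ↦ ?_
  unfold unitCircleY
  rw [div_lt_div_iff₀ (by positivity) (by positivity)]
  push_cast
  nlinarith [(k.cast_nonneg : (0 : K) ≤ k)]

theorem unitCircleX_injective : Function.Injective (unitCircleX : ℕ → K) := by
  intro j k h
  apply (unitCircleY_strictMono (K := K)).injective
  have hsq : (unitCircleY j : K) ^ 2 = unitCircleY k ^ 2 := by
    linear_combination unitCircleX_sq_add_unitCircleY_sq (K := K) j -
      unitCircleX_sq_add_unitCircleY_sq (K := K) k - (unitCircleX j + unitCircleX k) * h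
  exact (sq_eq_sq₀ (unitCircleY_pos j).le (unitCircleY_pos k).le).1 hsq

theorem exists_sq_add_sq_eq_one_notMem (F : Finset K) :
    ∃ a b : K, a ∉ F ∧ b ∉ F ∧ 0 < a ∧ a < b ∧ a ^ 2 + b ^ 2 = 1 := by
  obtain ⟨k, hk⟩ := Infinite.exists_notMem_finset
    (F.preimage unitCircleX unitCircleX_injective.injOn ∪
      F.preimage unitCircleY unitCircleY_strictMono.injective.injOn)
  simp only [mem_union, mem_preimage, not_or] at hk
  exact ⟨_, _, hk.1, hk.2, unitCircleX_pos k, unitCircleX_lt_unitCircleY k,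
    unitCircleX_sq_add_unitCircleY_sq k⟩

theorem exists_pos_finset_card_sum_sq (E : Finset K) (hE : ∀ x ∈ E, 0 < x) (m : ℕ) :
    ∃ P : Finset K, (∀ x ∈ P, 0 < x) ∧ #P = #E + 2 * m ∧ ∑ x ∈ P, x ^ 2 = ∑ x ∈ E, x ^ 2 + m := by
  induction m with
  | zero => exact ⟨E, hE, rfl, by simp⟩
  | succ m ih =>
    obtain ⟨P, hP, hcard, hsum⟩ := ih
    obtain ⟨a, b, ha, hb, ha0, hab, habs⟩ := exists_sq_add_sq_eq_one_notMem P
    have ha' : a ∉ insert b P := by simpa [hab.ne] using ha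
    refine ⟨insert a (insert b P), ?_, ?_, ?_⟩
    · simpa [ha0, ha0.trans hab] using hP
    · rw [card_insert_of_notMem ha', card_insert_of_notMem hb, hcard]
      ring
    · rw [sum_insert ha', sum_insert hb, hsum]
      push_cast
      linear_combination habs

end UnitCircle

theorem not_exists_finset_sum_sq_of_mem {n : ℕ} (hn : n ∈ ({1, 2, 3, 7} : Set ℕ)) :
    ¬∃ P : Finset ℚ, #P = n / 2 ∧ 2 * ∑ x ∈ P, x ^ 2 = (n : ℚ) / 2 := by
  rintro ⟨P, hcard, hsum⟩
  simp only [Set.mem_insert_iff, Set.mem_singleton_iff] at hn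
  rcases hn with rfl | rfl | rfl | rfl
  · simp [card_eq_zero.1 hcard] at hsum
  · obtain ⟨x, rfl⟩ := card_eq_one.1 hcard
    simp only [sum_singleton] at hsum
    exact sq_add_sq_add_sq_ne_seven (2 * x) 2 1 (by linear_combination 2 * hsum)
  · obtain ⟨x, rfl⟩ := card_eq_one.1 hcard
    simp only [sum_singleton] at hsum
    exact sq_add_sq_add_sq_ne_seven (2 * x) 2 0 (by linear_combination 2 * hsum)
  · obtain ⟨x, y, z, hxy, hxz, hyz, rfl⟩ := card_eq_three.1 hcard
    rw [sum_insert (by simp [hxy, hxz]), sum_pair hyz] at hsum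
    exact sq_add_sq_add_sq_ne_seven (2 * x) (2 * y) (2 * z) (by linear_combination 2 * hsum)

theorem exists_pos_finset_sum_sq_of_notMem {n : ℕ} (hn : n ∉ ({1, 2, 3, 7} : Set ℕ)) :
    ∃ P : Finset ℚ, (∀ x ∈ P, 0 < x) ∧ #P = n / 2 ∧ 2 * ∑ x ∈ P, x ^ 2 = (n : ℚ) / 2 := by
  simp only [Set.mem_insert_iff, Set.mem_singleton_iff, not_or] at hn
  obtain ⟨E, m, hE, hcard, hsum⟩ : ∃ (E : Finset ℚ) (m : ℕ),
      (∀ x ∈ E, 0 < x) ∧ #E + 2 * m = n / 2 ∧ 4 * (∑ x ∈ E, x ^ 2 + m) = n := by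
    rcases (by omega : n % 4 = 0 ∨ n % 4 = 1 ∨ n % 4 = 2 ∨ n % 4 = 3) with h | h | h | h
    · obtain ⟨m, rfl⟩ : ∃ m, n = 4 * m := ⟨n / 4, by omega⟩
      exact ⟨∅, m, by simp, by simp; omega, by push_cast; ring⟩
    · obtain ⟨m, rfl⟩ : ∃ m, n = 4 * m + 5 := ⟨n / 4 - 1, by omega⟩
      refine ⟨{1 / 2, 1}, m, by norm_num, ?_, ?_⟩
      · rw [show #({1 / 2, 1} : Finset ℚ) = 2 by norm_num]; omega
      · norm_num; ring
    · obtain ⟨m, rfl⟩ : ∃ m, n = 4 * m + 6 := ⟨n / 4 - 1, by omega⟩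
      refine ⟨{1 / 6, 1 / 3, 7 / 6}, m, by norm_num, ?_, ?_⟩
      · rw [show #({1 / 6, 1 / 3, 7 / 6} : Finset ℚ) = 3 by norm_num]; omega
      · norm_num; ring
    · obtain ⟨m, rfl⟩ : ∃ m, n = 4 * m + 11 := ⟨n / 4 - 2, by omega⟩
      refine ⟨{1 / 2, 1, 1 / 6, 1 / 3, 7 / 6}, m, by norm_num, ?_, ?_⟩
      · rw [show #({1 / 2, 1, 1 / 6, 1 / 3, 7 / 6} : Finset ℚ) = 5 by norm_num]; omega
      · norm_num; ring
  obtain ⟨P, hP, hPcard, hPsum⟩ := exists_pos_finset_card_sum_sq E hE m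
  exact ⟨P, hP, hPcard.trans hcard, by rw [hPsum]; linarith⟩

theorem stmt_0_general (n : ℕ) :
    (∃ S : Finset ℚ, S.card = n ∧ (∀ x ∈ S, -x ∈ S) ∧
      ∑ x ∈ S, x ^ 2 = (n : ℚ) / 2) ↔ n ∉ ({1, 2, 3, 7} : Set ℕ) := by
  rw [exists_finset_neg_mem_iff_exists_pos]
  exact ⟨fun ⟨P, _, hP⟩ hn ↦ not_exists_finset_sum_sq_of_mem hn ⟨P, hP⟩,
    exists_pos_finset_sum_sq_of_notMem⟩

/-- Theorem 1.1 (Hermite case): there exists an antipodal (negation-closed) set of `n`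
rational points with sum of squares `n/2` iff `n ∉ {1,2,3,7}`. -/
theorem stmt_0 (n : ℕ) (hn : 0 < n) :
    (∃ S : Finset ℚ, S.card = n ∧ (∀ x ∈ S, -x ∈ S) ∧
      ∑ x ∈ S, x ^ 2 = (n : ℚ) / 2) ↔ n ∉ ({1, 2, 3, 7} : Set ℕ) :=
  stmt_0_general n
end

section
/- For a positive integer n, there exists a finite set S of rational numbers contained in the open interval (−1, 1), with |S| = n, closed under negation (x ∈ S implies −x ∈ S), and satisfying Σ_{x∈S} x² = n/2, if and only if n ∉ {1, 2, 3, 7}. -/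
/-!
An antipodal set `S` consists of pairs `±x` with `x > 0`, together with `0` when `#S` is odd, so
the moment condition `∑ x² = #S / 2` says that `#S` is a sum of `⌊#S / 2⌋` squares `(2x)²` of
positive rationals. Hence `#S = 1` is impossible, `#S = 2, 3` would make `2` or `3` a rational
square, and `#S = 7` would write `7` as a sum of three rational squares, which is ruled out by
2-adic descent modulo `8`.

Conversely, every rational point `(a, b)` of the unit circle with `0 < b < a` gives a four-point
design `{±a, ±b}`. There are infinitely many such points, so one of these designs can be added
disjointly to any given design, and designs of sizes `0, 5, 6, 11` cover every residue modulo `4`.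
-/
open Finset Filter Function

-- `4 * x = 0` in `ZMod 8` says that `x` is even.
theorem ZMod.four_mul_eq_zero_of_sq_add_sq_add_sq_eq_seven_mul_sq :
    ∀ x y z w : ZMod 8, x ^ 2 + y ^ 2 + z ^ 2 = 7 * w ^ 2 →
      4 * x = 0 ∧ 4 * y = 0 ∧ 4 * z = 0 ∧ 4 * w = 0 := by
  decide

namespace Int

theorem two_dvd_of_sq_add_sq_add_sq_eq_mul_sq {m x y z w : ℤ} (hm : m % 8 = 7)
    (h : x ^ 2 + y ^ 2 + z ^ 2 = m * w ^ 2) : 2 ∣ x ∧ 2 ∣ y ∧ 2 ∣ z ∧ 2 ∣ w := by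
  have hm8 : (m : ZMod 8) = 7 := by
    rw [← ZMod.intCast_mod m 8]
    exact_mod_cast congrArg (fun t : ℤ => (t : ZMod 8)) hm
  have h8 := congrArg (fun t : ℤ => (t : ZMod 8)) h
  push_cast [hm8] at h8
  have two_dvd {t : ℤ} (ht : 4 * (t : ZMod 8) = 0) : 2 ∣ t := by
    have := (ZMod.intCast_zmod_eq_zero_iff_dvd (4 * t) 8).mp (by exact_mod_cast ht)
    omega
  obtain ⟨hx, hy, hz, hw⟩ :=
    ZMod.four_mul_eq_zero_of_sq_add_sq_add_sq_eq_seven_mul_sq _ _ _ _ h8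
  exact ⟨two_dvd hx, two_dvd hy, two_dvd hz, two_dvd hw⟩

theorem eq_zero_of_sq_add_sq_add_sq_eq_mul_sq {m x y z w : ℤ} (hm : m % 8 = 7)
    (h : x ^ 2 + y ^ 2 + z ^ 2 = m * w ^ 2) : w = 0 := by
  induction hw : w.natAbs using Nat.strong_induction_on generalizing x y z w with
  | _ k ih =>
    obtain ⟨⟨x, rfl⟩, ⟨y, rfl⟩, ⟨z, rfl⟩, ⟨w, rfl⟩⟩ := two_dvd_of_sq_add_sq_add_sq_eq_mul_sq hm h
    have h' : x ^ 2 + y ^ 2 + z ^ 2 = m * w ^ 2 :=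
      mul_left_cancel₀ four_ne_zero (by linear_combination h)
    by_contra hw0
    exact hw0 (by rw [ih w.natAbs (by omega) h' rfl, mul_zero])

end Int

theorem Rat.sq_add_sq_add_sq_ne {m : ℤ} (hm : m % 8 = 7) (x y z : ℚ) :
    x ^ 2 + y ^ 2 + z ^ 2 ≠ m := by
  intro h
  have hd := Int.eq_zero_of_sq_add_sq_add_sq_eq_mul_sq hm
    (x := x.num * y.den * z.den) (y := y.num * x.den * z.den) (z := z.num * x.den * y.den)
    (w := x.den * y.den * z.den) (by
      have : ((x.num * y.den * z.den : ℤ) : ℚ) ^ 2 + ((y.num * x.den * z.den : ℤ) : ℚ) ^ 2 +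
          ((z.num * x.den * y.den : ℤ) : ℚ) ^ 2 = m * ((x.den * y.den * z.den : ℤ) : ℚ) ^ 2 := by
        push_cast
        rw [← x.mul_den_eq_num, ← y.mul_den_eq_num, ← z.mul_den_eq_num, ← h]
        ring
      exact_mod_cast this)
  simp at hd

theorem Finset.sum_eq_two_nsmul_sum_pos_add_sum_zero_of_neg_mem {α M : Type*} [AddCommGroup α]
    [LinearOrder α] [IsOrderedAddMonoid α] [AddCommMonoid M] {S : Finset α} (hS : ∀ x ∈ S, -x ∈ S)
    {f : α → M} (hf : ∀ x, f (-x) = f x) :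
    ∑ x ∈ S, f x = 2 • ∑ x ∈ S with 0 < x, f x + ∑ x ∈ S with x = 0, f x := by
  have hneg : ∑ x ∈ S with x < 0, f x = ∑ x ∈ S with 0 < x, f x :=
    sum_nbij' Neg.neg Neg.neg (by simp +contextual [hS]) (by simp +contextual [hS])
      (by simp) (by simp) (by simp [hf])
  have hsplit : ∑ x ∈ S, f x =
      ∑ x ∈ S with 0 < x, f x + ∑ x ∈ S with x < 0, f x + ∑ x ∈ S with x = 0, f x := by
    simp only [sum_filter, ← sum_add_distrib]
    refine sum_congr rfl fun x _ => ?_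
    rcases lt_trichotomy x 0 with h | rfl | h
    · simp [h, h.not_gt, h.ne]
    · simp
    · simp [h, h.not_gt, h.ne']
  rw [hsplit, hneg, two_nsmul]

-- An antipodal rational 3-design for the Chebyshev measure on `(-1, 1)`: by antipodality the odd
-- moments vanish, and the second moment of that measure is `1 / 2`.
structure IsChebyshevDesign (S : Finset ℚ) : Prop where
  mem_Ioo : ∀ x ∈ S, -1 < x ∧ x < 1
  neg_mem : ∀ x ∈ S, -x ∈ S
  sum_sq : ∑ x ∈ S, x ^ 2 = (#S : ℚ) / 2

namespace IsChebyshevDesign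

variable {S T : Finset ℚ}

theorem exists_card_eq_sum_sq (hS : IsChebyshevDesign S) :
    ∃ P : Finset ℚ, #P = #S / 2 ∧ (#S : ℚ) = ∑ x ∈ P, (2 * x) ^ 2 := by
  refine ⟨S.filter (0 < ·), ?_, ?_⟩
  · have hcard := sum_eq_two_nsmul_sum_pos_add_sum_zero_of_neg_mem hS.neg_mem
      (f := fun _ => 1) fun _ => rfl
    have hzero : #(S.filter (· = 0)) ≤ 1 := by
      rw [filter_eq']; split_ifs <;> simp
    simp only [sum_const, smul_eq_mul, mul_one] at hcard
    omega
  · have hsum := sum_eq_two_nsmul_sum_pos_add_sum_zero_of_neg_mem hS.neg_mem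
      (f := (· ^ 2)) neg_sq
    have hzero : ∑ x ∈ S with x = 0, x ^ 2 = 0 := by rw [filter_eq']; split_ifs <;> simp
    rw [hzero, hS.sum_sq, two_nsmul] at hsum
    simp_rw [mul_pow, ← mul_sum]
    linear_combination 2 * hsum

theorem card_notMem (hS : IsChebyshevDesign S) :
    #S ∉ ({1, 2, 3, 7} : Set ℕ) := by
  obtain ⟨P, hP, hsum⟩ := hS.exists_card_eq_sum_sq
  have not_isSquare {m : ℕ} (hm : ¬IsSquare (m : ℚ)) (hcard : #P = 1)
      (h : (m : ℚ) = ∑ x ∈ P, (2 * x) ^ 2) : False := by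
    obtain ⟨a, rfl⟩ := card_eq_one.mp hcard
    rw [sum_singleton, sq] at h
    exact hm ⟨2 * a, h⟩
  simp only [Set.mem_insert_iff, Set.mem_singleton_iff]
  rintro (h | h | h | h) <;> rw [h] at hP hsum
  · simp_all
  · exact not_isSquare (m := 2) (by norm_num) hP hsum
  · exact not_isSquare (m := 3) (by norm_num) hP hsum
  · obtain ⟨a, b, c, hab, hac, hbc, rfl⟩ := card_eq_three.mp hP
    rw [sum_insert (by simp [hab, hac]), sum_insert (by simp [hbc]), sum_singleton,
      ← add_assoc] at hsum
    exact Rat.sq_add_sq_add_sq_ne (m := 7) (by norm_num) _ _ _ (by exact_mod_cast hsum.symm)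

theorem union (hS : IsChebyshevDesign S) (hT : IsChebyshevDesign T) (hST : Disjoint S T) :
    IsChebyshevDesign (S ∪ T) where
  mem_Ioo x hx := (mem_union.mp hx).elim (hS.mem_Ioo x) (hT.mem_Ioo x)
  neg_mem x hx := (mem_union.mp hx).elim (fun h => mem_union_left _ (hS.neg_mem x h))
    (fun h => mem_union_right _ (hT.neg_mem x h))
  sum_sq := by
    rw [sum_union hST, card_union_of_disjoint hST, hS.sum_sq, hT.sum_sq]
    push_cast; ring

end IsChebyshevDesign

theorem card_insert_neg_insert_neg {a b : ℚ} (hb : 0 < b) (hba : b < a) :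
    #{a, -a, b, -b} = 4 := by
  rw [card_insert_of_notMem, card_insert_of_notMem, card_pair] <;> grind

theorem isChebyshevDesign_of_sq_add_sq_eq_one {a b : ℚ} (hb : 0 < b) (hba : b < a) (ha : a < 1)
    (hab : a ^ 2 + b ^ 2 = 1) : IsChebyshevDesign {a, -a, b, -b} where
  mem_Ioo x hx := by
    simp only [mem_insert, mem_singleton] at hx
    rcases hx with rfl | rfl | rfl | rfl <;> constructor <;> linarith
  neg_mem x hx := by
    simp only [mem_insert, mem_singleton] at hx ⊢
    rcases hx with rfl | rfl | rfl | rfl <;> simp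
  sum_sq := by
    rw [card_insert_neg_insert_neg hb hba, sum_insert, sum_insert, sum_pair] <;> grind

def pythagoreanFst (k : ℕ) : ℚ := ((k : ℚ) ^ 2 - 1) / ((k : ℚ) ^ 2 + 1)
def pythagoreanSnd (k : ℕ) : ℚ := 2 * k / ((k : ℚ) ^ 2 + 1)

theorem pythagoreanFst_sq_add_pythagoreanSnd_sq (k : ℕ) :
    pythagoreanFst k ^ 2 + pythagoreanSnd k ^ 2 = 1 := by
  unfold pythagoreanFst pythagoreanSnd
  field_simp
  ring

theorem pythagoreanFst_strictMono : StrictMono pythagoreanFst := by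
  intro a b hab
  unfold pythagoreanFst
  rw [div_lt_div_iff₀ (by positivity) (by positivity)]
  have : (a : ℚ) < b := by exact_mod_cast hab
  nlinarith

theorem pythagoreanSnd_injective : Injective pythagoreanSnd := by
  intro a b hab
  unfold pythagoreanSnd at hab
  rw [div_eq_div_iff (by positivity) (by positivity)] at hab
  have : ((a : ℚ) - b) * (a * b - 1) = 0 := by linear_combination -hab / 2
  rcases mul_eq_zero.mp this with h | h
  · exact_mod_cast sub_eq_zero.mp h
  · have : a * b = 1 := by exact_mod_cast sub_eq_zero.mp h
    rw [mul_eq_one] at this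
    omega

theorem pythagoreanSnd_pos_lt_pythagoreanFst {k : ℕ} (hk : 3 ≤ k) :
    0 < pythagoreanSnd k ∧ pythagoreanSnd k < pythagoreanFst k := by
  have : (3 : ℚ) ≤ k := by exact_mod_cast hk
  unfold pythagoreanFst pythagoreanSnd
  refine ⟨by positivity, div_lt_div_of_pos_right (by nlinarith) (by positivity)⟩

theorem pythagoreanFst_lt_one (k : ℕ) : pythagoreanFst k < 1 := by
  unfold pythagoreanFst
  rw [div_lt_one (by positivity)]
  linarith

theorem exists_isChebyshevDesign_card_four_disjoint (T : Finset ℚ) :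
    ∃ D, IsChebyshevDesign D ∧ #D = 4 ∧ Disjoint D T := by
  have avoid {φ : ℕ → ℚ} (hφ : Injective φ) : ∀ᶠ k in atTop, φ k ∉ T :=
    Nat.cofinite_eq_atTop ▸ hφ.tendsto_cofinite.eventually T.eventually_cofinite_notMem
  obtain ⟨k, hk, h₁, h₂, h₃, h₄⟩ := ((eventually_ge_atTop 3).and <|
    (avoid pythagoreanFst_strictMono.injective).and <|
    (avoid (neg_injective.comp pythagoreanFst_strictMono.injective)).and <|
    (avoid pythagoreanSnd_injective).and
    (avoid (neg_injective.comp pythagoreanSnd_injective))).exists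
  obtain ⟨hpos, hlt⟩ := pythagoreanSnd_pos_lt_pythagoreanFst hk
  refine ⟨_, isChebyshevDesign_of_sq_add_sq_eq_one hpos hlt (pythagoreanFst_lt_one k)
    (pythagoreanFst_sq_add_pythagoreanSnd_sq k), card_insert_neg_insert_neg hpos hlt, ?_⟩
  simp only [disjoint_insert_left, disjoint_singleton_left]
  exact ⟨h₁, h₂, h₃, h₄⟩

-- `(19/26)² + (11/13)² = (11/17)² + (31/34)² = 5/4` and `(1/2)² = 1/4`.
theorem exists_isChebyshevDesign_card_of_mem :
    ∀ n ∈ ({0, 5, 6, 11} : Finset ℕ), ∃ S, IsChebyshevDesign S ∧ #S = n := by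
  simp only [mem_insert, mem_singleton, forall_eq_or_imp, forall_eq]
  refine ⟨⟨∅, ⟨by simp, by simp, by simp⟩, rfl⟩, ⟨{0, 19/26, -19/26, 11/13, -11/13}, ?_⟩,
    ⟨{1/2, -1/2, 19/26, -19/26, 11/13, -11/13}, ?_⟩,
    ⟨{0, 1/2, -1/2, 19/26, -19/26, 11/13, -11/13, 11/17, -11/17, 31/34, -31/34}, ?_⟩⟩ <;>
  exact ⟨⟨by norm_num, by norm_num, by norm_num⟩, by norm_num⟩

theorem exists_isChebyshevDesign_card {n : ℕ} (hn : n ∉ ({1, 2, 3, 7} : Set ℕ)) :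
    ∃ S, IsChebyshevDesign S ∧ #S = n := by
  induction n using Nat.strong_induction_on with
  | _ n ih =>
    by_cases hbase : n ∈ ({0, 5, 6, 11} : Finset ℕ)
    · exact exists_isChebyshevDesign_card_of_mem n hbase
    simp only [Set.mem_insert_iff, Set.mem_singleton_iff, mem_insert, mem_singleton] at hn hbase
    obtain ⟨S, hS, hcard⟩ := ih (n - 4) (by omega) <| by
      simp only [Set.mem_insert_iff, Set.mem_singleton_iff]
      omega
    obtain ⟨D, hD, hDcard, hDS⟩ := exists_isChebyshevDesign_card_four_disjoint S
    exact ⟨D ∪ S, hD.union hS hDS, by rw [card_union_of_disjoint hDS]; omega⟩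

theorem stmt_1_general (n : ℕ) :
    (∃ S : Finset ℚ, (∀ x ∈ S, -1 < x ∧ x < 1) ∧ S.card = n ∧ (∀ x ∈ S, -x ∈ S) ∧
      ∑ x ∈ S, x ^ 2 = (n : ℚ) / 2) ↔ n ∉ ({1, 2, 3, 7} : Set ℕ) := by
  constructor
  · rintro ⟨S, hmem, rfl, hneg, hsum⟩
    exact IsChebyshevDesign.card_notMem ⟨hmem, hneg, hsum⟩
  · intro hn
    obtain ⟨S, hS, rfl⟩ := exists_isChebyshevDesign_card hn
    exact ⟨S, hS.mem_Ioo, rfl, hS.neg_mem, hS.sum_sq⟩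

/-- Corollary 3.7 (Chebyshev case): there exists an antipodal (negation-closed) set of `n`
rational points in `(-1, 1)` with sum of squares `n/2` iff `n ∉ {1,2,3,7}`. -/
theorem stmt_1 (n : ℕ) (hn : 0 < n) :
    (∃ S : Finset ℚ, (∀ x ∈ S, -1 < x ∧ x < 1) ∧ S.card = n ∧ (∀ x ∈ S, -x ∈ S) ∧
      ∑ x ∈ S, x ^ 2 = (n : ℚ) / 2) ↔ n ∉ ({1, 2, 3, 7} : Set ℕ) :=
  stmt_1_general n
end

section
/- For every rational number t, the quantity D = 14(t²+t+1) is nonzero, and setting x₁ = (2t²−22t−13)/D, x₂ = (−13t²−4t+11)/D, x₃ = (11t²+26t+2)/D, one has x₁² + x₂² + x₃² = 3/2 and x₁⁴ + x₂⁴ + x₃⁴ = 9/8. -/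
/-- For every rational `t`, with `D = 14(t²+t+1) ≠ 0`, the rationals
`x₁ = (2t²−22t−13)/D`, `x₂ = (−13t²−4t+11)/D`, `x₃ = (11t²+26t+2)/D` satisfy
`x₁² + x₂² + x₃² = 3/2` and `x₁⁴ + x₂⁴ + x₃⁴ = 9/8`. -/
theorem stmt_3 (t : ℚ) :
    14 * (t ^ 2 + t + 1) ≠ 0 ∧
    ((2 * t ^ 2 - 22 * t - 13) / (14 * (t ^ 2 + t + 1))) ^ 2 +
      ((-13 * t ^ 2 - 4 * t + 11) / (14 * (t ^ 2 + t + 1))) ^ 2 +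
      ((11 * t ^ 2 + 26 * t + 2) / (14 * (t ^ 2 + t + 1))) ^ 2 = 3 / 2 ∧
    ((2 * t ^ 2 - 22 * t - 13) / (14 * (t ^ 2 + t + 1))) ^ 4 +
      ((-13 * t ^ 2 - 4 * t + 11) / (14 * (t ^ 2 + t + 1))) ^ 4 +
      ((11 * t ^ 2 + 26 * t + 2) / (14 * (t ^ 2 + t + 1))) ^ 4 = 9 / 8 := by
  have hD : 14 * (t ^ 2 + t + 1) ≠ 0 := by
    have h : t ^ 2 + t + 1 > 0 := by nlinarith [sq_nonneg (t + 1/2)]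
    positivity
  refine ⟨hD, ?_, ?_⟩ <;> rw [div_pow, div_pow, div_pow, ← add_div, ← add_div, div_eq_iff (pow_ne_zero _ hD)] <;> ring
end

section
/- Let y₁, …, y₆ be six pairwise distinct rational numbers satisfying Σᵢ yᵢ = 0, Σᵢ yᵢ² = 3, Σᵢ yᵢ³ = 0, Σᵢ yᵢ⁴ = 9/4, and Σᵢ yᵢ⁵ = 0. Then there exists t ∈ ℚ such that, as sets, {y₁, …, y₆} = {x₁(t), x₂(t), x₃(t), −x₁(t), −x₂(t), −x₃(t)}, where x₁(t) = (2t²−22t−13)/(14(t²+t+1)), x₂(t) = (−13t²−4t+11)/(14(t²+t+1)), and x₃(t) = (11t²+26t+2)/(14(t²+t+1)). -/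
lemma stmt4_sq_cases {z a : ℚ} (h : z ^ 2 = a ^ 2) : z = a ∨ z = -a := by
  have h' : (z - a) * (z + a) = 0 := by linear_combination h
  rcases mul_eq_zero.mp h' with h'' | h''
  · left; linarith
  · right; linarith

lemma stmt4_prod6_iff (z u v w : ℚ) :
    (z - u) * (z + u) * (z - v) * (z + v) * (z - w) * (z + w) = 0 ↔
      (z = u ∨ z = v ∨ z = w ∨ z = -u ∨ z = -v ∨ z = -w) := by
  simp only [mul_eq_zero, sub_eq_zero, add_eq_zero_iff_eq_neg]
  tauto

lemma stmt4_param_core (u v t : ℚ) (hD : (2 : ℚ) - 14 * u ≠ 0)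
    (ht : (2 - 14 * u) * t - (11 - 14 * v) = 0)
    (hc : u ^ 2 + u * v + v ^ 2 = 3 / 4) :
    (2 * t ^ 2 - 22 * t - 13) / (14 * (t ^ 2 + t + 1)) = u ∧
      (-13 * t ^ 2 - 4 * t + 11) / (14 * (t ^ 2 + t + 1)) = v ∧
      (11 * t ^ 2 + 26 * t + 2) / (14 * (t ^ 2 + t + 1)) = -u - v := by
  have hpos : (0 : ℚ) < 14 * (t ^ 2 + t + 1) := by nlinarith [sq_nonneg (2 * t + 1)]
  have hden := ne_of_gt hpos
  have hD4 : ((2 : ℚ) - 14 * u) ^ 4 ≠ 0 := pow_ne_zero _ hD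
  refine ⟨?_, ?_, ?_⟩
  · rw [div_eq_iff hden]
    have key : (2 * t ^ 2 - 22 * t - 13 - u * (14 * (t ^ 2 + t + 1))) * (2 - 14 * u) ^ 4 = 0 := by
      linear_combination ((392 - 2744 * u) * (2 - 14 * u) ^ 2) * hc + ((-88) + (-112) * v + (1736) * u + (2352) * u * v + (-10584) * u ^ 2 + (-16464) * u ^ 2 * v + (13720) * u ^ 3 + (38416) * u ^ 3 * v + (38416) * u ^ 4 + (16) * t + (-448) * t * u + (4704) * t * u ^ 2 + (-21952) * t * u ^ 3 + (38416) * t * u ^ 4) * ht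
    have h0 := (mul_eq_zero.mp key).resolve_right hD4
    linarith
  · rw [div_eq_iff hden]
    have key : (-13 * t ^ 2 - 4 * t + 11 - v * (14 * (t ^ 2 + t + 1))) * (2 - 14 * u) ^ 4 = 0 := by
      linear_combination ((2156 - 2744 * v) * (2 - 14 * u) ^ 2) * hc + ((-604) + (784) * v ^ 2 + (8680) * u + (784) * u * v + (-10976) * u * v ^ 2 + (-32732) * u ^ 2 + (-10976) * u ^ 2 * v + (38416) * u ^ 2 * v ^ 2 + (10976) * u ^ 3 + (38416) * u ^ 3 * v + (-104) * t + (-112) * t * v + (2184) * t * u + (2352) * t * u * v + (-15288) * t * u ^ 2 + (-16464) * t * u ^ 2 * v + (35672) * t * u ^ 3 + (38416) * t * u ^ 3 * v) * ht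
    have h0 := (mul_eq_zero.mp key).resolve_right hD4
    linarith
  · rw [div_eq_iff hden]
    have key : (11 * t ^ 2 + 26 * t + 2 - (-u - v) * (14 * (t ^ 2 + t + 1))) * (2 - 14 * u) ^ 4 = 0 := by
      linear_combination ((-2548 + 2744 * u + 2744 * v) * (2 - 14 * u) ^ 2) * hc + ((692) + (112) * v + (-784) * v ^ 2 + (-10416) * u + (-3136) * u * v + (10976) * u * v ^ 2 + (43316) * u ^ 2 + (27440) * u ^ 2 * v + (-38416) * u ^ 2 * v ^ 2 + (-24696) * u ^ 3 + (-76832) * u ^ 3 * v + (-38416) * u ^ 4 + (88) * t + (112) * t * v + (-1736) * t * u + (-2352) * t * u * v + (10584) * t * u ^ 2 + (16464) * t * u ^ 2 * v + (-13720) * t * u ^ 3 + (-38416) * t * u ^ 3 * v + (-38416) * t * u ^ 4) * ht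
    have h0 := (mul_eq_zero.mp key).resolve_right hD4
    linarith

lemma stmt4_param (u v : ℚ) (hD : (2 : ℚ) - 14 * u ≠ 0)
    (hc : u ^ 2 + u * v + v ^ 2 = 3 / 4) :
    ∃ t : ℚ,
      (2 * t ^ 2 - 22 * t - 13) / (14 * (t ^ 2 + t + 1)) = u ∧
      (-13 * t ^ 2 - 4 * t + 11) / (14 * (t ^ 2 + t + 1)) = v ∧
      (11 * t ^ 2 + 26 * t + 2) / (14 * (t ^ 2 + t + 1)) = -u - v := by
  refine ⟨(11 - 14 * v) / (2 - 14 * u), stmt4_param_core u v _ hD ?_ hc⟩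
  field_simp
  ring

lemma stmt4_Efact (u v w E : ℚ) (hsum : u + v + w = 0)
    (hc : u ^ 2 + u * v + v ^ 2 = 3 / 4)
    (hQ : u ^ 6 - 3 / 2 * u ^ 4 + 9 / 16 * u ^ 2 + E = 0) (z : ℚ) :
    z ^ 6 - 3 / 2 * z ^ 4 + 9 / 16 * z ^ 2 + E =
      (z - u) * (z + u) * (z - v) * (z + v) * (z - w) * (z + w) := by
  linear_combination hQ + ((1) * u ^ 2 * v ^ 2 * w + (-1) * u ^ 2 * v ^ 3 + (-1) * u ^ 3 * v ^ 2 + (-1) * z ^ 2 * v ^ 2 * w + (1) * z ^ 2 * v ^ 3 + (1) * z ^ 2 * u * v ^ 2 + (-1) * z ^ 2 * u ^ 2 * w + (1) * z ^ 2 * u ^ 2 * v + (1) * z ^ 2 * u ^ 3 + (1) * z ^ 4 * w + (-1) * z ^ 4 * v + (-1) * z ^ 4 * u) * hsum + (((3/4)) * u ^ 2 + (1) * u ^ 2 * v ^ 2 + (1) * u ^ 3 * v + (-1) * u ^ 4 + ((-3/4)) * z ^ 2 + (-1) * z ^ 2 * v ^ 2 + (-1) * z ^ 2 * u * v + (-1)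 * z ^ 2 * u ^ 2 + (2) * z ^ 4) * hc

lemma stmt4_kernel (u v w : ℚ) (hsum : u + v + w = 0)
    (hc : u ^ 2 + u * v + v ^ 2 = 3 / 4) (huv : u ≠ v) :
    ∃ t : ℚ, ({u, v, w, -u, -v, -w} : Set ℚ) =
        {(2 * t ^ 2 - 22 * t - 13) / (14 * (t ^ 2 + t + 1)),
         (-13 * t ^ 2 - 4 * t + 11) / (14 * (t ^ 2 + t + 1)),
         (11 * t ^ 2 + 26 * t + 2) / (14 * (t ^ 2 + t + 1)),
         -((2 * t ^ 2 - 22 * t - 13) / (14 * (t ^ 2 + t + 1))),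
         -((-13 * t ^ 2 - 4 * t + 11) / (14 * (t ^ 2 + t + 1))),
         -((11 * t ^ 2 + 26 * t + 2) / (14 * (t ^ 2 + t + 1)))} := by
  by_cases h7 : (2 : ℚ) - 14 * u ≠ 0
  · obtain ⟨t, e1, e2, e3⟩ := stmt4_param u v h7 hc
    refine ⟨t, ?_⟩
    rw [e1, e2, e3, show -u - v = w by linarith]
  · rw [not_ne_iff] at h7
    have hv : (2 : ℚ) - 14 * v ≠ 0 := fun h => huv (by linarith)
    have hc' : v ^ 2 + v * w + w ^ 2 = 3 / 4 := by
      linear_combination hc + (w - u) * hsum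
    obtain ⟨t, e1, e2, e3⟩ := stmt4_param v w hv hc'
    refine ⟨t, ?_⟩
    rw [e1, e2, e3, show -v - w = u by linarith]
    ext z
    simp only [Set.mem_insert_iff, Set.mem_singleton_iff]
    tauto

lemma stmt4_core (a b c E : ℚ) (hab : b ^ 2 ≠ a ^ 2) (hac : c ^ 2 ≠ a ^ 2)
    (hbc : c ^ 2 ≠ b ^ 2)
    (hQa : a ^ 6 - 3 / 2 * a ^ 4 + 9 / 16 * a ^ 2 + E = 0)
    (hQb : b ^ 6 - 3 / 2 * b ^ 4 + 9 / 16 * b ^ 2 + E = 0)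
    (hQc : c ^ 6 - 3 / 2 * c ^ 4 + 9 / 16 * c ^ 2 + E = 0) :
    ∃ u v w : ℚ, u + v + w = 0 ∧ u ^ 2 + u * v + v ^ 2 = 3 / 4 ∧ u ≠ v ∧
      ∀ z : ℚ, z ^ 6 - 3 / 2 * z ^ 4 + 9 / 16 * z ^ 2 + E =
        (z - u) * (z + u) * (z - v) * (z + v) * (z - w) * (z + w) := by
  have h12 : (a ^ 2 - b ^ 2) *
      (a ^ 4 + a ^ 2 * b ^ 2 + b ^ 4 - 3 / 2 * a ^ 2 - 3 / 2 * b ^ 2 + 9 / 16) = 0 := by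
    linear_combination hQa - hQb
  have hAB := (mul_eq_zero.mp h12).resolve_left (sub_ne_zero.mpr hab.symm)
  have h13 : (a ^ 2 - c ^ 2) *
      (a ^ 4 + a ^ 2 * c ^ 2 + c ^ 4 - 3 / 2 * a ^ 2 - 3 / 2 * c ^ 2 + 9 / 16) = 0 := by
    linear_combination hQa - hQc
  have hAC := (mul_eq_zero.mp h13).resolve_left (sub_ne_zero.mpr hac.symm)
  have hd : (b ^ 2 - c ^ 2) * (a ^ 2 + b ^ 2 + c ^ 2 - 3 / 2) = 0 := by
    linear_combination hAB - hAC
  have hs' := (mul_eq_zero.mp hd).resolve_left (sub_ne_zero.mpr (fun h => hbc h.symm))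
  have hs : a ^ 2 + b ^ 2 + c ^ 2 = 3 / 2 := by linarith
  have hsP : a ^ 2 * b ^ 2 + a ^ 2 * c ^ 2 + b ^ 2 * c ^ 2 = 9 / 16 := by
    linear_combination (a ^ 2 + b ^ 2) * hs - hAB
  have hprod : (a + b + c) * (a + b - c) * (a - b + c) * (a - b - c) = 0 := by
    linear_combination (a ^ 2 + b ^ 2 + c ^ 2 + 3 / 2) * hs - 4 * hsP
  rcases mul_eq_zero.mp hprod with h' | h4c
  · rcases mul_eq_zero.mp h' with h'' | h3c
    · rcases mul_eq_zero.mp h'' with h1c | h2c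
      · -- a + b + c = 0
        have hsum : a + b + c = 0 := h1c
        have hcc : a ^ 2 + a * b + b ^ 2 = 3 / 4 := by
          linear_combination (1 / 2) * hs + ((a + b - c) / 2) * h1c
        exact ⟨a, b, c, hsum, hcc, fun h => hab (by rw [h]),
          fun z => stmt4_Efact a b c E hsum hcc hQa z⟩
      · -- a + b - c = 0
        have hsum : a + b + -c = 0 := by linarith
        have hcc : a ^ 2 + a * b + b ^ 2 = 3 / 4 := by
          linear_combination (1 / 2) * hs + ((a + b + c) / 2) * h2c
        exact ⟨a, b, -c, hsum, hcc, fun h => hab (by rw [h]),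
          fun z => stmt4_Efact a b (-c) E hsum hcc hQa z⟩
    · -- a - b + c = 0
      have hsum : a + -b + c = 0 := by linarith
      have hcc : a ^ 2 + a * -b + (-b) ^ 2 = 3 / 4 := by
        linear_combination (1 / 2) * hs + ((a - b - c) / 2) * h3c
      exact ⟨a, -b, c, hsum, hcc, fun h => hab (by rw [h]; ring),
        fun z => stmt4_Efact a (-b) c E hsum hcc hQa z⟩
  · -- a - b - c = 0
    have hsum : a + -b + -c = 0 := by linarith
    have hcc : a ^ 2 + a * -b + (-b) ^ 2 = 3 / 4 := by
      linear_combination (1 / 2) * hs + ((a - b + c) / 2) * h4c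
    exact ⟨a, -b, -c, hsum, hcc, fun h => hab (by rw [h]; ring),
      fun z => stmt4_Efact a (-b) (-c) E hsum hcc hQa z⟩

/-- Theorem 1.3: every 5-design with 6 rational points for the Chebyshev measure
(i.e. six pairwise distinct rationals with the given power sums) arises from the
rational parametrization. -/
theorem stmt_4 (y : Fin 6 → ℚ) (hinj : Function.Injective y)
    (h1 : ∑ i, y i = 0)
    (h2 : ∑ i, (y i) ^ 2 = 3)
    (h3 : ∑ i, (y i) ^ 3 = 0)
    (h4 : ∑ i, (y i) ^ 4 = 9 / 4)
    (h5 : ∑ i, (y i) ^ 5 = 0) :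
    ∃ t : ℚ,
      (Set.range y) =
        {(2 * t ^ 2 - 22 * t - 13) / (14 * (t ^ 2 + t + 1)),
         (-13 * t ^ 2 - 4 * t + 11) / (14 * (t ^ 2 + t + 1)),
         (11 * t ^ 2 + 26 * t + 2) / (14 * (t ^ 2 + t + 1)),
         -((2 * t ^ 2 - 22 * t - 13) / (14 * (t ^ 2 + t + 1))),
         -((-13 * t ^ 2 - 4 * t + 11) / (14 * (t ^ 2 + t + 1))),
         -((11 * t ^ 2 + 26 * t + 2) / (14 * (t ^ 2 + t + 1)))} := by
  classical
  simp only [Fin.sum_univ_six] at h1 h2 h3 h4 h5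
  have he2 : y 0*y 1 + y 0*y 2 + y 0*y 3 + y 0*y 4 + y 0*y 5 + y 1*y 2 + y 1*y 3 + y 1*y 4 + y 1*y 5 + y 2*y 3 + y 2*y 4 + y 2*y 5 + y 3*y 4 + y 3*y 5 + y 4*y 5 = -(3 / 2) := by
    linear_combination ((y 0 + y 1 + y 2 + y 3 + y 4 + y 5) / 2) * h1 - (1 / 2) * h2
  have he3 : y 0*y 1*y 2 + y 0*y 1*y 3 + y 0*y 1*y 4 + y 0*y 1*y 5 + y 0*y 2*y 3 + y 0*y 2*y 4 + y 0*y 2*y 5 + y 0*y 3*y 4 + y 0*y 3*y 5 + y 0*y 4*y 5 + y 1*y 2*y 3 + y 1*y 2*y 4 + y 1*y 2*y 5 + y 1*y 3*y 4 + y 1*y 3*y 5 + y 1*y 4*y 5 + y 2*y 3*y 4 + y 2*y 3*y 5 + y 2*y 4*y 5 + y 3*y 4*y 5 = 0 := by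
    linear_combination (((y 0 + y 1 + y 2 + y 3 + y 4 + y 5) ^ 2 - 9) / 6) * h1 - ((y 0 + y 1 + y 2 + y 3 + y 4 + y 5) / 2) * h2 + (1 / 3) * h3
  have he4 : y 0*y 1*y 2*y 3 + y 0*y 1*y 2*y 4 + y 0*y 1*y 2*y 5 + y 0*y 1*y 3*y 4 + y 0*y 1*y 3*y 5 + y 0*y 1*y 4*y 5 + y 0*y 2*y 3*y 4 + y 0*y 2*y 3*y 5 + y 0*y 2*y 4*y 5 + y 0*y 3*y 4*y 5 + y 1*y 2*y 3*y 4 + y 1*y 2*y 3*y 5 + y 1*y 2*y 4*y 5 + y 1*y 3*y 4*y 5 + y 2*y 3*y 4*y 5 = 9 / 16 := by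
    linear_combination (((y 0 + y 1 + y 2 + y 3 + y 4 + y 5) ^ 3 - 18 * (y 0 + y 1 + y 2 + y 3 + y 4 + y 5)) / 24) * h1 +
      ((9 + 3 * (y 0 ^ 2 + y 1 ^ 2 + y 2 ^ 2 + y 3 ^ 2 + y 4 ^ 2 + y 5 ^ 2) - 6 * (y 0 + y 1 + y 2 + y 3 + y 4 + y 5) ^ 2) / 24) * h2 + ((y 0 + y 1 + y 2 + y 3 + y 4 + y 5) / 3) * h3 - (1 / 4) * h4
  have he5 : y 0*y 1*y 2*y 3*y 4 + y 0*y 1*y 2*y 3*y 5 + y 0*y 1*y 2*y 4*y 5 + y 0*y 1*y 3*y 4*y 5 + y 0*y 2*y 3*y 4*y 5 + y 1*y 2*y 3*y 4*y 5 = 0 := by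
    linear_combination (((y 0 + y 1 + y 2 + y 3 + y 4 + y 5) ^ 4 - 30 * (y 0 + y 1 + y 2 + y 3 + y 4 + y 5) ^ 2 + 135 / 2) / 120) * h1 +
      ((3 * (y 0 + y 1 + y 2 + y 3 + y 4 + y 5) * (y 0 ^ 2 + y 1 ^ 2 + y 2 ^ 2 + y 3 ^ 2 + y 4 ^ 2 + y 5 ^ 2) - 2 * (y 0 + y 1 + y 2 + y 3 + y 4 + y 5) ^ 3 + 9 * (y 0 + y 1 + y 2 + y 3 + y 4 + y 5)) / 24) * h2 +
      (((y 0 + y 1 + y 2 + y 3 + y 4 + y 5) ^ 2 - (y 0 ^ 2 + y 1 ^ 2 + y 2 ^ 2 + y 3 ^ 2 + y 4 ^ 2 + y 5 ^ 2)) / 6) * h3 - ((y 0 + y 1 + y 2 + y 3 + y 4 + y 5) / 4) * h4 + (1 / 5) * h5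
  obtain ⟨E, hEdef⟩ : ∃ E : ℚ, E = y 0 * y 1 * y 2 * y 3 * y 4 * y 5 := ⟨_, rfl⟩
  have hfactP : ∀ x : ℚ, x ^ 6 - 3 / 2 * x ^ 4 + 9 / 16 * x ^ 2 + E = ∏ i, (x - y i) := by
    intro x
    rw [Fin.prod_univ_six]
    linear_combination x ^ 5 * h1 - x ^ 4 * he2 + x ^ 3 * he3 - x ^ 2 * he4 + x * he5 + hEdef
  have hq : ∀ z : ℚ, z ∈ Set.range y ↔ z ^ 6 - 3 / 2 * z ^ 4 + 9 / 16 * z ^ 2 + E = 0 := by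
    intro z
    constructor
    · rintro ⟨i, rfl⟩
      rw [hfactP]
      exact Finset.prod_eq_zero (Finset.mem_univ i) (sub_self _)
    · intro h
      rw [hfactP] at h
      obtain ⟨i, -, hi⟩ := Finset.prod_eq_zero_iff.mp h
      exact ⟨i, (sub_eq_zero.mp hi).symm⟩
  set T : Finset ℚ := Finset.image y Finset.univ with hTdef
  have hT6 : T.card = 6 := by
    rw [hTdef, Finset.card_image_of_injective _ hinj, Finset.card_univ, Fintype.card_fin]
  have hmemT : ∀ z : ℚ, z ∈ T → z ∈ Set.range y := by
    intro z hz
    rw [hTdef] at hz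
    obtain ⟨i, -, hi⟩ := Finset.mem_image.mp hz
    exact ⟨i, hi⟩
  have hbex : ∃ b, b ∈ Set.range y ∧ b ^ 2 ≠ (y 0) ^ 2 := by
    by_contra hcon
    push_neg at hcon
    have hsub : T ⊆ {y 0, -(y 0)} := by
      intro z hz
      have hz2 := hcon z (hmemT z hz)
      simp only [Finset.mem_insert, Finset.mem_singleton]
      exact stmt4_sq_cases hz2
    have hle := Finset.card_le_card hsub
    have hc2 := Finset.card_insert_le (y 0) ({-(y 0)} : Finset ℚ)
    simp only [Finset.card_singleton] at hc2
    omega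
  obtain ⟨b, hbmem, hb2⟩ := hbex
  have hcex : ∃ c, c ∈ Set.range y ∧ c ^ 2 ≠ (y 0) ^ 2 ∧ c ^ 2 ≠ b ^ 2 := by
    by_contra hcon
    push_neg at hcon
    have hsub : T ⊆ {y 0, -(y 0), b, -b} := by
      intro z hz
      simp only [Finset.mem_insert, Finset.mem_singleton]
      by_cases hz0 : z ^ 2 = (y 0) ^ 2
      · rcases stmt4_sq_cases hz0 with h | h
        · exact Or.inl h
        · exact Or.inr (Or.inl h)
      · have hz2 := hcon z (hmemT z hz) hz0
        rcases stmt4_sq_cases hz2 with h | h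
        · exact Or.inr (Or.inr (Or.inl h))
        · exact Or.inr (Or.inr (Or.inr h))
    have hle := Finset.card_le_card hsub
    have hc1 := Finset.card_insert_le (y 0) ({-(y 0), b, -b} : Finset ℚ)
    have hc2 := Finset.card_insert_le (-(y 0)) ({b, -b} : Finset ℚ)
    have hc3 := Finset.card_insert_le b ({-b} : Finset ℚ)
    simp only [Finset.card_singleton] at hc3
    omega
  obtain ⟨c, hcmem, hc2a, hc2b⟩ := hcex
  have hQa : (y 0) ^ 6 - 3 / 2 * (y 0) ^ 4 + 9 / 16 * (y 0) ^ 2 + E = 0 := (hq _).mp ⟨0, rfl⟩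
  have hQb := (hq b).mp hbmem
  have hQc := (hq c).mp hcmem
  obtain ⟨u, v, w, hsum, hcuv, huv, hfact2⟩ := stmt4_core (y 0) b c E hb2 hc2a hc2b hQa hQb hQc
  have RS : Set.range y = ({u, v, w, -u, -v, -w} : Set ℚ) := by
    ext z
    simp only [Set.mem_insert_iff, Set.mem_singleton_iff]
    rw [hq z, hfact2 z]
    exact stmt4_prod6_iff z u v w
  obtain ⟨t, SE⟩ := stmt4_kernel u v w hsum hcuv huv
  exact ⟨t, RS.trans SE⟩
end

section
/- For integers α, β define a(α,β) = α² + αβ + β², b(α,β) = 2α² − 22αβ − 13β², c(α,β) = −13α² − 4αβ + 11β², d(α,β) = 11α² + 26αβ + 2β². Then for all integers s, t, u, v and every k ∈ {1, 2, 3, 4, 5}, (a(s,t)b(u,v))^k + (−a(s,t)b(u,v))^k + (a(s,t)c(u,v))^k + (−a(s,t)c(u,v))^k + (a(s,t)d(u,v))^k + (−a(s,t)d(u,v))^k = (a(u,v)b(s,t))^k + (−a(u,v)b(s,t))^k + (a(u,v)c(s,t))^k + (−a(u,v)c(s,t))^k + (a(u,v)d(s,t))^k + (−a(u,v)d(s,t))^k.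 -/
/-- The quadratic form `a(α,β) = α² + αβ + β²`. -/
def aQF (α β : ℤ) : ℤ := α ^ 2 + α * β + β ^ 2

/-- The quadratic form `b(α,β) = 2α² − 22αβ − 13β²`. -/
def bQF (α β : ℤ) : ℤ := 2 * α ^ 2 - 22 * α * β - 13 * β ^ 2

/-- The quadratic form `c(α,β) = −13α² − 4αβ + 11β²`. -/
def cQF (α β : ℤ) : ℤ := -13 * α ^ 2 - 4 * α * β + 11 * β ^ 2

/-- The quadratic form `d(α,β) = 11α² + 26αβ + 2β²`. -/
def dQF (α β : ℤ) : ℤ := 11 * α ^ 2 + 26 * α * β + 2 * β ^ 2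

/-!
Odd power sums of a set `{±x, ±y, ±z}` vanish, and even ones are `2 (x^k + y^k + z^k)`, so only
`k = 2, 4` need an argument. The forms satisfy `b + c + d = 0` and `b² + c² + d² = 294 a²`, and for
three numbers summing to zero Newton's identities give `2 (b⁴ + c⁴ + d⁴) = (b² + c² + d²)²`.
Hence `b^k + c^k + d^k = κ_k a^k` for `k = 2, 4`, and both sides of the identity equal
`2 κ_k a(s,t)^k a(u,v)^k`.
-/

section SignedPowerSum

variable {R : Type*} [CommRing R] {k : ℕ}

theorem Odd.pow_add_neg_pow_sum_eq_zero (hk : Odd k) (x y z : R) :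
    x ^ k + (-x) ^ k + y ^ k + (-y) ^ k + z ^ k + (-z) ^ k = 0 := by
  simp only [hk.neg_pow]
  ring

theorem Even.pow_add_neg_pow_sum_eq (hk : Even k) (x y z : R) :
    x ^ k + (-x) ^ k + y ^ k + (-y) ^ k + z ^ k + (-z) ^ k = 2 * (x ^ k + y ^ k + z ^ k) := by
  simp only [hk.neg_pow]
  ring

theorem two_mul_pow_four_sum_of_add_eq_zero {x y z : R} (h : x + y + z = 0) :
    2 * (x ^ 4 + y ^ 4 + z ^ 4) = (x ^ 2 + y ^ 2 + z ^ 2) ^ 2 := by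
  obtain rfl : z = -x - y := by linear_combination h
  ring

end SignedPowerSum

theorem bQF_add_cQF_add_dQF (α β : ℤ) : bQF α β + cQF α β + dQF α β = 0 := by
  simp only [bQF, cQF, dQF]
  ring

theorem bQF_sq_add_cQF_sq_add_dQF_sq (α β : ℤ) :
    bQF α β ^ 2 + cQF α β ^ 2 + dQF α β ^ 2 = 294 * aQF α β ^ 2 := by
  simp only [aQF, bQF, cQF, dQF]
  ring

theorem bQF_pow_four_add_cQF_pow_four_add_dQF_pow_four (α β : ℤ) :
    bQF α β ^ 4 + cQF α β ^ 4 + dQF α β ^ 4 = 43218 * aQF α β ^ 4 := by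
  have h := two_mul_pow_four_sum_of_add_eq_zero (bQF_add_cQF_add_dQF α β)
  rw [bQF_sq_add_cQF_sq_add_dQF_sq] at h
  linarith

theorem exists_bQF_pow_add_cQF_pow_add_dQF_pow_eq_mul_aQF_pow {k : ℕ} (hk : k = 2 ∨ k = 4) :
    ∃ κ : ℤ, ∀ α β, bQF α β ^ k + cQF α β ^ k + dQF α β ^ k = κ * aQF α β ^ k := by
  rcases hk with rfl | rfl
  · exact ⟨294, bQF_sq_add_cQF_sq_add_dQF_sq⟩
  · exact ⟨43218, bQF_pow_four_add_cQF_pow_four_add_dQF_pow_four⟩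

/-- Theorem 1.5 (first part): the two sextuples give an ideal PTE solution of degree 5. -/
theorem stmt_6 (s t u v : ℤ) (k : ℕ) (hk : k ∈ ({1, 2, 3, 4, 5} : Set ℕ)) :
    (aQF s t * bQF u v) ^ k + (-(aQF s t * bQF u v)) ^ k +
      (aQF s t * cQF u v) ^ k + (-(aQF s t * cQF u v)) ^ k +
      (aQF s t * dQF u v) ^ k + (-(aQF s t * dQF u v)) ^ k =
    (aQF u v * bQF s t) ^ k + (-(aQF u v * bQF s t)) ^ k +
      (aQF u v * cQF s t) ^ k + (-(aQF u v * cQF s t)) ^ k +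
      (aQF u v * dQF s t) ^ k + (-(aQF u v * dQF s t)) ^ k := by
  rcases Nat.even_or_odd k with hk_even | hk_odd
  · have hk24 : k = 2 ∨ k = 4 := by
      obtain ⟨m, rfl⟩ := hk_even
      simp only [Set.mem_insert_iff, Set.mem_singleton_iff] at hk
      omega
    obtain ⟨κ, hκ⟩ := exists_bQF_pow_add_cQF_pow_add_dQF_pow_eq_mul_aQF_pow hk24
    rw [hk_even.pow_add_neg_pow_sum_eq, hk_even.pow_add_neg_pow_sum_eq]
    simp only [mul_pow, ← mul_add, hκ]
    ring
  · rw [hk_odd.pow_add_neg_pow_sum_eq_zero, hk_odd.pow_add_neg_pow_sum_eq_zero]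
end

section
/- For rational numbers x₁, x₂, the equation 2(x₁⁴ + x₂⁴)(x₁² + x₂² + 1) = 3(x₁² + x₂²)² holds if and only if (x₁, x₂) ∈ {(−1,−1), (−1,1), (0,0), (1,−1), (1,1)}. -/
private lemma sq_ne_two' (t : ℚ) : t ^ 2 ≠ 2 := by
  intro h
  have h2 : ((t : ℝ)) ^ 2 = 2 := by exact_mod_cast congrArg (fun q : ℚ => (q : ℝ)) h
  have hs : Real.sqrt 2 = |(t : ℝ)| := by rw [← h2, Real.sqrt_sq_eq_abs]
  have : ((|t| : ℚ) : ℝ) = Real.sqrt 2 := by rw [hs]; push_cast; ring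
  exact Rat.not_irrational |t| (this ▸ irrational_sqrt_two)

private lemma odd_coprime_two' {a : ℤ} (h : Odd a) : IsCoprime a 2 := by
  obtain ⟨k, rfl⟩ := h
  exact ⟨1, -k, by ring⟩

/-- no square equals 2 * odd * square except trivially -/
private lemma descent2' (O : ℤ) (hO : Odd O) :
    ∀ N : ℕ, ∀ a h : ℤ, a.natAbs = N → a ^ 2 = 2 * O * h ^ 2 → h = 0 := by
  intro N
  induction N using Nat.strong_induction_on with
  | _ N ih =>
    intro a h haN heq
    rcases eq_or_ne a 0 with rfl | ha0
    · have h0 : O * h ^ 2 = 0 := by linarith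
      rcases mul_eq_zero.mp h0 with h1 | h2
      · exact absurd h1 (by rintro rfl; simp [Int.odd_iff] at hO)
      · exact (pow_eq_zero_iff two_ne_zero).mp h2
    · have ha : Even a := by
        have : Even (a ^ 2) := ⟨O * h ^ 2, by linarith⟩
        exact ((Int.even_pow).mp this).1
      obtain ⟨a', rfl⟩ := ha
      have h1 : 2 * a' ^ 2 = O * h ^ 2 := by nlinarith [heq]
      have hh : Even h := by
        have he : Even (O * h ^ 2) := ⟨a' ^ 2, by linarith⟩
        rcases Int.even_mul.mp he with hO' | h2
        · exact absurd ((Int.not_odd_iff_even.mpr hO')) (not_not_intro hO)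
        · exact ((Int.even_pow).mp h2).1
      obtain ⟨h', rfl⟩ := hh
      have h2 : a' ^ 2 = 2 * O * h' ^ 2 := by nlinarith
      have ha' : a' ≠ 0 := by rintro rfl; simp at ha0
      have hlt : a'.natAbs < N := by
        rw [← haN]
        have h2' : (a' + a').natAbs = 2 * a'.natAbs := by
          rw [show a' + a' = 2 * a' by ring, Int.natAbs_mul]; norm_num
        have h3' : a'.natAbs ≠ 0 := Int.natAbs_ne_zero.mpr ha'
        omega
      have := ih a'.natAbs hlt a' h' rfl h2
      simp [this]

private lemma no_8_sq (O a h : ℤ) (hO : Odd O) (hh : h ≠ 0) : a ^ 2 ≠ 8 * O * h ^ 2 := by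
  intro heq
  have h2 : a ^ 2 = 2 * O * (2 * h) ^ 2 := by linarith [heq]
  have := descent2' O hO a.natAbs a (2 * h) rfl (by nlinarith [heq])
  omega

private lemma split2 {a b c : ℤ} (h : IsCoprime a b) (heq : a * b = c ^ 2)
    (ha : 0 < a) (hb : 0 < b) : (∃ u : ℤ, a = u ^ 2) ∧ ∃ v : ℤ, b = v ^ 2 := by
  constructor
  · rcases Int.sq_of_isCoprime h heq with ⟨u, hu | hu⟩
    · exact ⟨u, hu⟩
    · exfalso; nlinarith [sq_nonneg u]
  · rcases Int.sq_of_isCoprime h.symm (by rw [mul_comm]; exact heq) with ⟨v, hv | hv⟩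
    · exact ⟨v, hv⟩
    · exfalso; nlinarith [sq_nonneg v]

/-- a rational whose square is an integer square value: extract integer root -/
private lemma int_sq_of_rat_sq {A : ℤ} {y : ℚ} (h : y ^ 2 = (A : ℚ)) : ∃ a : ℤ, a ^ 2 = A := by
  have hnum : y.num ^ 2 = A * (y.den : ℤ) ^ 2 := by
    have hden : ((y.den : ℤ) : ℚ) ≠ 0 := by
      have := y.den_pos
      exact_mod_cast Nat.cast_ne_zero.mpr this.ne'
    have h' : ((y.num : ℚ) / ((y.den : ℤ) : ℚ)) ^ 2 = (A : ℚ) := by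
      rw [show ((y.num : ℚ) / ((y.den : ℤ) : ℚ)) = y by exact_mod_cast Rat.num_div_den y]
      exact h
    field_simp at h'
    rw [mul_comm]; exact_mod_cast h'
  have hcop : IsCoprime (y.num) ((y.den : ℤ)) := by
    rw [Int.isCoprime_iff_gcd_eq_one]
    exact y.reduced
  have hdvd : ((y.den : ℤ)) ^ 2 ∣ y.num ^ 2 := ⟨A, by linarith [hnum]⟩
  have hunit : IsUnit (((y.den : ℤ)) ^ 2) :=
    (hcop.pow (m := 2) (n := 2)).isUnit_of_dvd' hdvd dvd_rfl
  have hd1 : ((y.den : ℤ)) ^ 2 = 1 := by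
    rcases Int.isUnit_iff.mp hunit with h1 | h1
    · exact h1
    · nlinarith [sq_nonneg ((y.den : ℤ))]
  exact ⟨y.num, by rw [hnum, hd1, mul_one]⟩

/-- Core of case A: leads to `z₁^4 + z₂^4 = u^2`, contradiction with Fermat. -/
private lemma caseA_aux (u n' : ℤ) (hn' : n' ≠ 0) :
    ∀ M N : ℤ, 0 < M → 0 < N → IsCoprime M N → Odd (M + N) → N ^ 2 < M ^ 2 →
      u ^ 2 = M ^ 2 + N ^ 2 → M * N * ((M + N) * (M - N)) = n' ^ 2 → False := by
  intro M N hM hN cop hodd hlt hu hP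
  have hP' : M * (N * ((M + N) * (M - N))) = n' ^ 2 := by linear_combination hP
  have hMN : 0 < M + N := by linarith
  have hNM : N < M := lt_of_pow_lt_pow_left₀ 2 hM.le hlt
  have hMN' : 0 < M - N := by linarith
  have c1 : IsCoprime M (M + N) := by
    have h := cop.add_mul_left_right 1
    rwa [show N + M * 1 = M + N by ring] at h
  have c2 : IsCoprime M (M - N) := by
    have h := cop.neg_right.add_mul_left_right 1
    rwa [show -N + M * 1 = M - N by ring] at h
  have c3 : IsCoprime N (M + N) := by
    have h := cop.symm.add_mul_left_right 1
    rwa [show M + N * 1 = M + N by ring] at h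
  have c4 : IsCoprime N (M - N) := by
    have h := cop.symm.add_mul_left_right (-1)
    rwa [show M + N * (-1) = M - N by ring] at h
  have c5 : IsCoprime (M + N) (M - N) := by
    have h2 : IsCoprime (M + N) (-(2 * N)) :=
      ((odd_coprime_two' hodd).mul_right c3.symm).neg_right
    have h := h2.add_mul_left_right 1
    rwa [show -(2 * N) + (M + N) * 1 = M - N by ring] at h
  obtain ⟨⟨z₁, hz₁⟩, ⟨e1, he1⟩⟩ :=
    split2 (cop.mul_right (c1.mul_right c2)) hP' hM
      (mul_pos hN (mul_pos hMN hMN'))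
  obtain ⟨⟨z₂, hz₂⟩, -⟩ :=
    split2 (c3.mul_right c4) he1 hN (mul_pos hMN hMN')
  have hz₁0 : z₁ ≠ 0 := by intro h0; rw [h0] at hz₁; norm_num at hz₁; omega
  have hz₂0 : z₂ ≠ 0 := by intro h0; rw [h0] at hz₂; norm_num at hz₂; omega
  exact not_fermat_42 hz₁0 hz₂0
    (show z₁ ^ 4 + z₂ ^ 4 = u ^ 2 by rw [hu, hz₁, hz₂]; ring)

/-- Case A wrapper: from a primitive Pythagorean triple `(A', B', m)` with
`A' * B' = 2 n'^2` and `m` a perfect square, contradiction. -/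
private lemma caseA (m n' u A' B' : ℤ) (hmpos : 0 < m) (hn' : n' ≠ 0)
    (hA'pos : 0 < A') (hB'pos : 0 < B')
    (hPy : PythagoreanTriple A' B' m) (hgcd : Int.gcd A' B' = 1)
    (hAB : A' * B' = 2 * n' ^ 2) (hmu : m = u ^ 2) : False := by
  obtain ⟨M, N, hMN, hz, hgcdMN, hpar⟩ :=
    (PythagoreanTriple.coprime_classification).mp ⟨hPy, hgcd⟩
  have hm : m = M ^ 2 + N ^ 2 := by
    rcases hz with h | h
    · exact h
    · exfalso; linarith [sq_nonneg M, sq_nonneg N]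
  have hprod : 0 < M * N ∧ 0 < M ^ 2 - N ^ 2 ∧
      M * N * ((M + N) * (M - N)) = n' ^ 2 := by
    rcases hMN with ⟨h1, h2⟩ | ⟨h1, h2⟩
    · rw [h1] at hA'pos; rw [h2] at hB'pos
      refine ⟨by linarith, by linarith, ?_⟩
      have h4 : 2 * (M * N * ((M + N) * (M - N))) = 2 * n' ^ 2 := by
        rw [← hAB, h1, h2]; ring
      linarith
    · rw [h2] at hB'pos; rw [h1] at hA'pos
      refine ⟨by linarith, by linarith, ?_⟩
      have h4 : 2 * (M * N * ((M + N) * (M - N))) = 2 * n' ^ 2 := by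
        rw [← hAB, h1, h2]; ring
      linarith
  obtain ⟨hMNpos, hM2N2, hP⟩ := hprod
  have copMN : IsCoprime M N := Int.isCoprime_iff_gcd_eq_one.mpr hgcdMN
  have hu : u ^ 2 = M ^ 2 + N ^ 2 := by rw [← hm, hmu]
  rcases mul_pos_iff.mp hMNpos with ⟨h1, h2⟩ | ⟨h1, h2⟩
  · exact caseA_aux u n' hn' M N h1 h2 copMN
      (Int.odd_iff.mpr (by omega)) (by linarith) hu hP
  · refine caseA_aux u n' hn' (-M) (-N) (by linarith) (by linarith)
      (copMN.neg_left.neg_right) (Int.odd_iff.mpr (by omega))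
      (by rw [neg_sq, neg_sq]; linarith) (by linear_combination hu) ?_
    · linear_combination hP

set_option maxHeartbeats 2000000 in
/-- Main integer lemma: no coprime pair `0 < n < m` makes both
`2m(m±n)(2m²-n²)(m²+n²)` perfect squares. -/
private lemma key_lemma (m n : ℤ) (hm : 0 < m) (hn : 0 < n) (hlt : n ^ 2 < m ^ 2)
    (cop : IsCoprime m n)
    (hA : ∃ a : ℤ, a ^ 2 = 2*m*(m+n)*(2*m^2 - n^2)*(m^2+n^2))
    (hB : ∃ b : ℤ, b ^ 2 = 2*m*(m-n)*(2*m^2 - n^2)*(m^2+n^2)) : False := by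
  obtain ⟨a, ha⟩ := hA
  obtain ⟨b, hb⟩ := hB
  have hmnp : 0 < m + n := by linarith
  have hnm : n < m := lt_of_pow_lt_pow_left₀ 2 hm.le hlt
  have hmnm : 0 < m - n := by linarith
  have h2m2 : 0 < 2*m^2 - n^2 := by linarith [sq_nonneg m]
  have hm2n2 : 0 < m^2 + n^2 := by linarith [sq_nonneg n]
  -- construct c with c² = m² - n²
  have hKpos : 0 < 2*m*(2*m^2-n^2)*(m^2+n^2) :=
    mul_pos (mul_pos (by linarith : (0:ℤ) < 2*m) h2m2) hm2n2
  have hab : (a*b)^2 = (2*m*(2*m^2-n^2)*(m^2+n^2))^2 * (m^2-n^2) := by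
    linear_combination (b^2) * ha + (2*m*(m+n)*(2*m^2-n^2)*(m^2+n^2)) * hb
  have hKdvd : (2*m*(2*m^2-n^2)*(m^2+n^2)) ∣ a*b :=
    (Int.pow_dvd_pow_iff (two_ne_zero)).mp ⟨m^2-n^2, hab⟩
  obtain ⟨c, hc0⟩ := hKdvd
  have hc : c^2 = m^2 - n^2 := by
    have h2 : (2*m*(2*m^2-n^2)*(m^2+n^2))^2 * c^2
        = (2*m*(2*m^2-n^2)*(m^2+n^2))^2 * (m^2-n^2) := by
      rw [← mul_pow, ← hc0]; exact hab
    exact mul_left_cancel₀ (pow_ne_zero 2 hKpos.ne') h2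
  rcases Int.even_or_odd m with hme | hmo
  · -- m even : mod 4 contradiction
    have hno : Odd n := by
      rcases Int.even_or_odd n with hne | hno
      · exfalso
        obtain ⟨m₀, hm₀⟩ := hme; obtain ⟨n₀, hn₀⟩ := hne
        have d1 : (2:ℤ) ∣ m := ⟨m₀, by omega⟩
        have d2 : (2:ℤ) ∣ n := ⟨n₀, by omega⟩
        have h2 := cop.isUnit_of_dvd' d1 d2
        rw [Int.isUnit_iff] at h2; omega
      · exact hno
    obtain ⟨m₀, hm₀⟩ := hme
    obtain ⟨k, hk⟩ := hno
    have hcc : c^2 = (2*m₀)^2 - (2*k+1)^2 := by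
      rw [hc, show m = 2*m₀ by omega, hk]
    have h4 : ((c : ZMod 4))^2 = (2*(m₀ : ZMod 4))^2 - (2*(k : ZMod 4)+1)^2 := by
      exact_mod_cast congrArg (fun z : ℤ => (z : ZMod 4)) hcc
    exact (by decide : ∀ C M K : ZMod 4, C^2 ≠ (2*M)^2 - (2*K+1)^2) _ _ _ h4
  · rcases Int.even_or_odd n with hne | hno
    · -- Case A : m odd, n even
      obtain ⟨n', hn2⟩ : ∃ n', n = 2 * n' := by
        obtain ⟨n'', h⟩ := hne; exact ⟨n'', by omega⟩
      subst hn2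
      rw [show ((2*n')^2 : ℤ) = 4*n'^2 from by ring] at hlt
      have hmodd : Odd m := hmo
      obtain ⟨α, hα⟩ := hmo
      have hn'pos : 0 < n' := by omega
      have hn'0 : n' ≠ 0 := hn'pos.ne'
      have copn' : IsCoprime m n' := cop.of_mul_right_right
      -- parity facts
      have oddF2 : Odd (m + 2*n') := ⟨α + n', by omega⟩
      have oddF2' : Odd (m - 2*n') := ⟨α - n', by omega⟩
      have oddF3 : Odd (m^2 - 2*n'^2) := ⟨2*α^2 + 2*α - n'^2, by rw [hα]; ring⟩
      have oddF4 : Odd (m^2 + 4*n'^2) := ⟨2*α^2 + 2*α + 2*n'^2, by rw [hα]; ring⟩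
      have oddP : Odd (m^2 - 4*n'^2) := ⟨2*α^2 + 2*α - 2*n'^2, by rw [hα]; ring⟩
      -- coprimality battery
      have cmF2 : IsCoprime m (m + 2*n') := by
        have h := cop.add_mul_left_right 1
        rwa [show 2*n' + m * 1 = m + 2*n' by ring] at h
      have cmF2' : IsCoprime m (m - 2*n') := by
        have h := cop.neg_right.add_mul_left_right 1
        rwa [show -(2*n') + m * 1 = m - 2*n' by ring] at h
      have cmF3 : IsCoprime m (m^2 - 2*n'^2) := by
        have h := (((odd_coprime_two' hmodd).neg_right).mul_right
          (copn'.pow_right (n := 2))).add_mul_left_right m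
        rwa [show -2 * n'^2 + m * m = m^2 - 2*n'^2 by ring] at h
      have cmF4 : IsCoprime m (m^2 + 4*n'^2) := by
        have h := (cop.pow_right (n := 2)).add_mul_left_right m
        rwa [show (2*n')^2 + m * m = m^2 + 4*n'^2 by ring] at h
      have cF2n' : IsCoprime (m + 2*n') n' := by
        have h := copn'.symm.add_mul_left_right 2
        exact (by rwa [show m + n' * 2 = m + 2*n' by ring] at h : IsCoprime n' (m + 2*n')).symm
      have cF2'n' : IsCoprime (m - 2*n') n' := by
        have h := copn'.symm.add_mul_left_right (-2)
        exact (by rwa [show m + n' * (-2) = m - 2*n' by ring] at h : IsCoprime n' (m - 2*n')).symm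
      have cF22 : IsCoprime (m + 2*n') 2 := odd_coprime_two' oddF2
      have cF2'2 : IsCoprime (m - 2*n') 2 := odd_coprime_two' oddF2'
      have cF2F2' : IsCoprime (m + 2*n') (m - 2*n') := by
        have h2 : IsCoprime (m + 2*n') (-(2^2 * n')) :=
          ((cF22.pow_right (n := 2)).mul_right cF2n').neg_right
        have h := h2.add_mul_left_right 1
        rwa [show -(2^2 * n') + (m + 2*n') * 1 = m - 2*n' by ring] at h
      have cF2F3 : IsCoprime (m + 2*n') (m^2 - 2*n'^2) := by
        have h2 : IsCoprime (m + 2*n') (2 * n'^2) :=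
          cF22.mul_right (cF2n'.pow_right (n := 2))
        have h := h2.add_mul_left_right (m - 2*n')
        rwa [show 2 * n'^2 + (m + 2*n') * (m - 2*n') = m^2 - 2*n'^2 by ring] at h
      have cF2F4 : IsCoprime (m + 2*n') (m^2 + 4*n'^2) := by
        have h2 : IsCoprime (m + 2*n') (2^3 * n'^2) :=
          (cF22.pow_right (n := 3)).mul_right (cF2n'.pow_right (n := 2))
        have h := h2.add_mul_left_right (m - 2*n')
        rwa [show 2^3 * n'^2 + (m + 2*n') * (m - 2*n') = m^2 + 4*n'^2 by ring] at h
      have cF2'F3 : IsCoprime (m - 2*n') (m^2 - 2*n'^2) := by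
        have h2 : IsCoprime (m - 2*n') (2 * n'^2) :=
          cF2'2.mul_right (cF2'n'.pow_right (n := 2))
        have h := h2.add_mul_left_right (m + 2*n')
        rwa [show 2 * n'^2 + (m - 2*n') * (m + 2*n') = m^2 - 2*n'^2 by ring] at h
      have cF2'F4 : IsCoprime (m - 2*n') (m^2 + 4*n'^2) := by
        have h2 : IsCoprime (m - 2*n') (2^3 * n'^2) :=
          (cF2'2.pow_right (n := 3)).mul_right (cF2'n'.pow_right (n := 2))
        have h := h2.add_mul_left_right (m + 2*n')
        rwa [show 2^3 * n'^2 + (m - 2*n') * (m + 2*n') = m^2 + 4*n'^2 by ring] at h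
      have cn'F3 : IsCoprime (m^2 - 2*n'^2) n' := by
        have h := (copn'.symm.mul_right copn'.symm).add_mul_left_right (-2*n')
        exact (by rwa [show m * m + n' * (-2*n') = m^2 - 2*n'^2 by ring] at h :
          IsCoprime n' (m^2 - 2*n'^2)).symm
      have h3F3 : ¬ (3:ℤ) ∣ (m^2 - 2*n'^2) := by
        intro hdvd
        have h0 : ((m : ZMod 3))^2 - 2*((n' : ZMod 3))^2 = 0 := by
          have := (ZMod.intCast_zmod_eq_zero_iff_dvd (m^2 - 2*n'^2) 3).mpr hdvd
          push_cast at this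
          linear_combination this
        have hz := (by decide : ∀ x y : ZMod 3, x^2 - 2*y^2 = 0 → x = 0 ∧ y = 0)
          (m : ZMod 3) (n' : ZMod 3) h0
        have h3m : (3:ℤ) ∣ m := (ZMod.intCast_zmod_eq_zero_iff_dvd m 3).mp hz.1
        have h3n : (3:ℤ) ∣ n' := (ZMod.intCast_zmod_eq_zero_iff_dvd n' 3).mp hz.2
        have h2 := copn'.isUnit_of_dvd' h3m h3n
        rw [Int.isUnit_iff] at h2; omega
      have cF3F4 : IsCoprime (m^2 - 2*n'^2) (m^2 + 4*n'^2) := by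
        have c2' : IsCoprime (m^2 - 2*n'^2) 2 := odd_coprime_two' oddF3
        have c3' : IsCoprime (m^2 - 2*n'^2) 3 :=
          ((Int.prime_three.coprime_iff_not_dvd).mpr h3F3).symm
        have h2 : IsCoprime (m^2 - 2*n'^2) (2 * (3 * n'^2)) :=
          c2'.mul_right (c3'.mul_right (cn'F3.pow_right (n := 2)))
        have h := h2.add_mul_left_right 1
        rwa [show 2 * (3 * n'^2) + (m^2 - 2*n'^2) * 1 = m^2 + 4*n'^2 by ring] at h
      -- positivity
      have hposF2 : 0 < m + 2*n' := by linarith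
      have hposF2' : 0 < m - 2*n' := by linarith
      have hposF3 : 0 < m^2 - 2*n'^2 := by linarith [sq_nonneg n']
      have hposF4 : 0 < m^2 + 4*n'^2 := by linarith [sq_nonneg n']
      -- a = 2a₀, b = 2b₀
      have hS1 : a^2 = 4 * (m * ((m + 2*n') * ((m^2 - 2*n'^2) * (m^2 + 4*n'^2)))) := by
        rw [ha]; ring
      have haev : Even a := by
        have h2 : Even (a^2) := ⟨2 * (m * ((m + 2*n') * ((m^2 - 2*n'^2) * (m^2 + 4*n'^2)))),
          by linarith⟩
        exact (Int.even_pow.mp h2).1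
      obtain ⟨a₀, ha₀⟩ := haev
      rw [ha₀] at hS1
      have hS1' : m * ((m + 2*n') * ((m^2 - 2*n'^2) * (m^2 + 4*n'^2))) = a₀^2 := by
        have h4 : 4 * (m * ((m + 2*n') * ((m^2 - 2*n'^2) * (m^2 + 4*n'^2)))) = 4 * a₀^2 := by
          linear_combination -hS1
        linarith
      have hS2 : b^2 = 4 * (m * ((m - 2*n') * ((m^2 - 2*n'^2) * (m^2 + 4*n'^2)))) := by
        rw [hb]; ring
      have hbev : Even b := by
        have h2 : Even (b^2) := ⟨2 * (m * ((m - 2*n') * ((m^2 - 2*n'^2) * (m^2 + 4*n'^2)))),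
          by linarith⟩
        exact (Int.even_pow.mp h2).1
      obtain ⟨b₀, hb₀⟩ := hbev
      rw [hb₀] at hS2
      have hS2' : m * ((m - 2*n') * ((m^2 - 2*n'^2) * (m^2 + 4*n'^2))) = b₀^2 := by
        have h4 : 4 * (m * ((m - 2*n') * ((m^2 - 2*n'^2) * (m^2 + 4*n'^2)))) = 4 * b₀^2 := by
          linear_combination -hS2
        linarith
      -- split into squares
      obtain ⟨⟨u, hu⟩, ⟨e1, he1⟩⟩ :=
        split2 (cmF2.mul_right (cmF3.mul_right cmF4)) hS1' hm
          (mul_pos hposF2 (mul_pos hposF3 hposF4))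
      obtain ⟨⟨v, hv⟩, ⟨e2, he2⟩⟩ :=
        split2 (cF2F3.mul_right cF2F4) he1 hposF2 (mul_pos hposF3 hposF4)
      obtain ⟨-, ⟨q, hq⟩⟩ := split2 cF3F4 he2 hposF3 hposF4
      obtain ⟨-, ⟨e3, he3⟩⟩ :=
        split2 (cmF2'.mul_right (cmF3.mul_right cmF4)) hS2' hm
          (mul_pos hposF2' (mul_pos hposF3 hposF4))
      obtain ⟨⟨w, hw⟩, -⟩ :=
        split2 (cF2'F3.mul_right cF2'F4) he3 hposF2' (mul_pos hposF3 hposF4)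
      -- assemble p, q'
      set p : ℤ := |v| * |w| with hpdef
      have hp2 : p^2 = m^2 - 4*n'^2 := by
        rw [hpdef, mul_pow, sq_abs, sq_abs, ← hv, ← hw]; ring
      set q' : ℤ := |q| with hq'def
      have hq'2 : q'^2 = m^2 + 4*n'^2 := by rw [hq'def, sq_abs, ← hq]
      have hppos : 0 < p := by
        have hv0 : v ≠ 0 := by intro h0; rw [h0] at hv; norm_num at hv; omega
        have hw0 : w ≠ 0 := by intro h0; rw [h0] at hw; norm_num at hw; omega
        exact mul_pos (abs_pos.mpr hv0) (abs_pos.mpr hw0)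
      have hq'pos : 0 < q' := by
        have hq0 : q ≠ 0 := by intro h0; rw [h0] at hq; norm_num at hq; omega
        exact abs_pos.mpr hq0
      have oddp : Odd p := by
        have hsq : Odd (p^2) := by rw [hp2]; exact oddP
        rcases Int.odd_pow.mp hsq with h | h
        · exact h
        · omega
      have oddq' : Odd q' := by
        have hsq : Odd (q'^2) := by rw [hq'2]; exact oddF4
        rcases Int.odd_pow.mp hsq with h | h
        · exact h
        · omega
      have copqp : IsCoprime q' p := by
        have cF4n' : IsCoprime (m^2 + 4*n'^2) n' := by
          have h := (copn'.symm.mul_right copn'.symm).add_mul_left_right (4*n')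
          exact (by rwa [show m * m + n' * (4*n') = m^2 + 4*n'^2 by ring] at h :
            IsCoprime n' (m^2 + 4*n'^2)).symm
        have h2 : IsCoprime (m^2 + 4*n'^2) (-(2^3 * n'^2)) :=
          (((odd_coprime_two' oddF4).pow_right (n := 3)).mul_right
            (cF4n'.pow_right (n := 2))).neg_right
        have h := h2.add_mul_left_right 1
        rw [show -(2^3 * n'^2) + (m^2 + 4*n'^2) * 1 = m^2 - 4*n'^2 by ring] at h
        rw [← hq'2, ← hp2] at h
        exact (IsCoprime.pow_left_iff two_pos).mp ((IsCoprime.pow_right_iff two_pos).mp h)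
      have hqgtp : p < q' := by
        have hdiff : p^2 < q'^2 := by
          have h8 : q'^2 - p^2 = 8*n'^2 := by linear_combination hq'2 - hp2
          have h9 : 0 < n'^2 := by positivity
          linarith [h8, h9]
        exact lt_of_pow_lt_pow_left₀ 2 hq'pos.le hdiff
      obtain ⟨A', hA'⟩ : ∃ A', q' + p = 2 * A' := by
        have h1 := Int.odd_iff.mp oddp
        have h2 := Int.odd_iff.mp oddq'
        exact ⟨(q' + p)/2, by omega⟩
      obtain ⟨B', hB'⟩ : ∃ B', q' - p = 2 * B' := by
        have h1 := Int.odd_iff.mp oddp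
        have h2 := Int.odd_iff.mp oddq'
        exact ⟨(q' - p)/2, by omega⟩
      have hA'pos : 0 < A' := by omega
      have hB'pos : 0 < B' := by omega
      have hPy : PythagoreanTriple A' B' m := by
        have h4 : (2*A')*(2*A') + (2*B')*(2*B') = 4*(m*m) := by
          rw [← hA', ← hB']
          linear_combination 2*hq'2 + 2*hp2
        have h4' : 4*(A'*A') + 4*(B'*B') = 4*(m*m) := by linear_combination h4
        exact (by linarith : A'*A' + B'*B' = m*m)
      have hgcd : Int.gcd A' B' = 1 := by
        rw [← Int.isCoprime_iff_gcd_eq_one]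
        obtain ⟨γ, δ, hγδ⟩ := copqp
        refine ⟨γ + δ, γ - δ, ?_⟩
        have hq'' : q' = A' + B' := by omega
        have hp'' : p = A' - B' := by omega
        rw [hq'', hp''] at hγδ
        linear_combination hγδ
      have hABval : A' * B' = 2 * n'^2 := by
        have h4 : (2*A')*(2*B') = 8*n'^2 := by
          rw [← hA', ← hB']
          linear_combination hq'2 - hp2
        have h4' : 4*(A'*B') = 4*(2*n'^2) := by linear_combination h4
        linarith
      exact caseA m n' u A' B' hm hn'0 hA'pos hB'pos hPy hgcd hABval hu
    · -- Case B : m, n both odd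
      have hmodd : Odd m := hmo
      obtain ⟨α, hα⟩ := hmo
      obtain ⟨β, hβ⟩ := hno
      obtain ⟨h, hh⟩ : ∃ h, m + n = 2*h := ⟨(m+n)/2, by omega⟩
      obtain ⟨k2, hk2⟩ : ∃ k, m - n = 2*k := ⟨(m-n)/2, by omega⟩
      have hm' : m = h + k2 := by omega
      have hn' : n = h - k2 := by omega
      have hcev : Even c := by
        have h2 : Even (c^2) := by
          rw [hc]
          exact ⟨2*(α^2 + α - β^2 - β), by rw [hα, hβ]; ring⟩
        exact (Int.even_pow.mp h2).1
      obtain ⟨c', hc'⟩ := hcev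
      have hhk : h * k2 = c' ^ 2 := by
        have e1 : (m+n)*(m-n) = (2*h)*(2*k2) := by rw [hh, hk2]
        have e2 : c = 2*c' := by omega
        have h4 : 4*(h*k2) = 4*(c'^2) := by
          linear_combination -e1 - hc + (c + 2*c')*e2
        linarith
      have hch : IsCoprime h k2 := by
        obtain ⟨γ, δ, hγδ⟩ := cop
        refine ⟨γ + δ, γ - δ, ?_⟩
        rw [hm', hn'] at hγδ
        linear_combination hγδ
      have hhpos : 0 < h := by omega
      have hkpos : 0 < k2 := by omega
      obtain ⟨⟨h', hh'⟩, -⟩ := split2 hch hhk hhpos hkpos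
      have hDodd : Odd (2*(α^2 + α + β^2 + β) + 1) := ⟨α^2 + α + β^2 + β, by ring⟩
      have hD : m^2 + n^2 = 2*(2*(α^2 + α + β^2 + β) + 1) := by rw [hα, hβ]; ring
      have odd2m2 : Odd (2*m^2 - n^2) := ⟨m^2 - 2*β^2 - 2*β - 1, by rw [hβ]; ring⟩
      have hOodd : Odd (m * ((2*m^2 - n^2) * (2*(α^2 + α + β^2 + β) + 1))) :=
        hmodd.mul (odd2m2.mul hDodd)
      have hfin : a^2 = 8 * (m * ((2*m^2 - n^2) * (2*(α^2 + α + β^2 + β) + 1))) * h'^2 := by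
        rw [ha, hD, hh, hh']; ring
      have hh'0 : h' ≠ 0 := by intro h0; rw [h0] at hh'; norm_num at hh'; omega
      exact no_8_sq _ a h' hOodd hh'0 hfin

set_option maxHeartbeats 1000000 in
/-- Theorem 2.14 (i): classification of the rational points of
`2(x₁⁴ + x₂⁴)(x₁² + x₂² + 1) = 3(x₁² + x₂²)²`. -/
theorem stmt_7 (x₁ x₂ : ℚ) :
    2 * (x₁ ^ 4 + x₂ ^ 4) * (x₁ ^ 2 + x₂ ^ 2 + 1) = 3 * (x₁ ^ 2 + x₂ ^ 2) ^ 2 ↔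
    (x₁, x₂) ∈ ({(-1, -1), (-1, 1), (0, 0), (1, -1), (1, 1)} : Set (ℚ × ℚ)) := by
  constructor
  · intro heq
    simp only [Set.mem_insert_iff, Set.mem_singleton_iff, Prod.mk.injEq]
    by_cases hδ : x₁ ^ 2 = x₂ ^ 2
    · -- the diagonal case x₁² = x₂²
      have hfac : (x₁ - x₂) * (x₁ + x₂) = 0 := by linear_combination hδ
      rcases mul_eq_zero.mp hfac with h | h
      · have hx : x₁ = x₂ := by linarith
        subst hx
        have h0 : x₁ ^ 4 * (8 * (x₁ ^ 2 - 1)) = 0 := by linear_combination heq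
        rcases mul_eq_zero.mp h0 with h4 | h2
        · have hx0 : x₁ = 0 := by
            have := pow_eq_zero_iff (n := 4) (by norm_num) |>.mp h4
            exact this
          right; right; left; exact ⟨hx0, hx0⟩
        · have hfac2 : (x₁ - 1) * (x₁ + 1) = 0 := by linear_combination h2 / 8
          rcases mul_eq_zero.mp hfac2 with h1 | h1
          · have : x₁ = 1 := by linarith
            right; right; right; right; exact ⟨this, this⟩
          · have : x₁ = -1 := by linarith
            left; exact ⟨this, this⟩
      · have hx : x₁ = -x₂ := by linarith
        subst hx
        have h0 : x₂ ^ 4 * (8 * (x₂ ^ 2 - 1)) = 0 := by linear_combination heq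
        rcases mul_eq_zero.mp h0 with h4 | h2
        · have hx0 : x₂ = 0 := by
            exact pow_eq_zero_iff (n := 4) (by norm_num) |>.mp h4
          right; right; left; exact ⟨by rw [hx0]; norm_num, hx0⟩
        · have hfac2 : (x₂ - 1) * (x₂ + 1) = 0 := by linear_combination h2 / 8
          rcases mul_eq_zero.mp hfac2 with h1 | h1
          · have hv : x₂ = 1 := by linarith
            right; left; exact ⟨by rw [hv], hv⟩
          · have hv : x₂ = -1 := by linarith
            right; right; right; left; exact ⟨by rw [hv]; norm_num, hv⟩
    · -- the main case x₁² ≠ x₂² : we derive a contradiction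
      exfalso
      have hx1 : x₁ ≠ 0 := by
        intro h0; subst h0
        have hx2 : x₂ ≠ 0 := by intro h0'; exact hδ (by rw [h0'])
        have h2 : x₂ ^ 4 * (2 * x₂ ^ 2 - 1) = 0 := by linear_combination heq
        rcases mul_eq_zero.mp h2 with h4 | h5
        · exact hx2 (pow_eq_zero_iff (n := 4) (by norm_num) |>.mp h4)
        · exact sq_ne_two' (2 * x₂) (by linear_combination 2 * h5)
      have hx2 : x₂ ≠ 0 := by
        intro h0; subst h0
        have h2 : x₁ ^ 4 * (2 * x₁ ^ 2 - 1) = 0 := by linear_combination heq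
        rcases mul_eq_zero.mp h2 with h4 | h5
        · exact hx1 (pow_eq_zero_iff (n := 4) (by norm_num) |>.mp h4)
        · exact sq_ne_two' (2 * x₁) (by linear_combination 2 * h5)
      have hσpos : (0:ℚ) < x₁ ^ 2 + x₂ ^ 2 := by positivity
      have hσne : (x₁ ^ 2 + x₂ ^ 2 : ℚ) ≠ 0 := hσpos.ne'
      set R : ℚ := (x₁ ^ 2 - x₂ ^ 2) / (x₁ ^ 2 + x₂ ^ 2) with hRdef
      have hR0 : R ≠ 0 := div_ne_zero (sub_ne_zero.mpr hδ) hσne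
      have hRσ : R * (x₁ ^ 2 + x₂ ^ 2) = x₁ ^ 2 - x₂ ^ 2 := by
        rw [hRdef]; exact div_mul_cancel₀ _ hσne
      have hkey3 : ((1 + R ^ 2) * (x₁ ^ 2 + x₂ ^ 2 + 1)) * (x₁ ^ 2 + x₂ ^ 2) ^ 2
          = 3 * (x₁ ^ 2 + x₂ ^ 2) ^ 2 := by
        linear_combination heq +
          (R * (x₁ ^ 2 + x₂ ^ 2) + (x₁ ^ 2 - x₂ ^ 2)) * (x₁ ^ 2 + x₂ ^ 2 + 1) * hRσ
      have hkey : (1 + R ^ 2) * (x₁ ^ 2 + x₂ ^ 2 + 1) = 3 :=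
        mul_right_cancel₀ (pow_ne_zero 2 hσne) hkey3
      have hkey2 : (1 + R ^ 2) * (x₁ ^ 2 + x₂ ^ 2) = 2 - R ^ 2 := by
        linear_combination hkey
      have hx1m : 2 * (1 + R ^ 2) * x₁ ^ 2 = (2 - R ^ 2) * (1 + R) := by
        linear_combination (-(1 + R ^ 2)) * hRσ + (1 + R) * hkey2
      have hx2m : 2 * (1 + R ^ 2) * x₂ ^ 2 = (2 - R ^ 2) * (1 - R) := by
        linear_combination (1 + R ^ 2) * hRσ + (1 - R) * hkey2
      have h1p : (0:ℚ) < (2 - R ^ 2) * (1 + R) := by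
        rw [← hx1m]; positivity
      have h2p : (0:ℚ) < (2 - R ^ 2) * (1 - R) := by
        rw [← hx2m]; positivity
      have hR2 : R ^ 2 < 1 := by nlinarith [mul_pos h1p h2p, sq_nonneg (2 - R ^ 2)]
      -- pass to the numerator and denominator of R
      set n : ℤ := R.num with hndef
      set m : ℤ := (R.den : ℤ) with hmdef
      have hm : (0:ℤ) < m := by rw [hmdef]; exact_mod_cast R.pos
      have hn0 : n ≠ 0 := Rat.num_ne_zero.mpr hR0
      have hmQ : ((m : ℚ)) = ((R.den : ℚ)) := by rw [hmdef]; push_cast; ring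
      have hmQ0 : ((m:ℚ)) ≠ 0 := by
        rw [hmQ]
        exact_mod_cast Nat.cast_ne_zero.mpr R.pos.ne'
      have hcast : ((n : ℚ)) = R * ((m : ℚ)) := by
        have hden : ((R.den : ℚ)) ≠ 0 := by exact_mod_cast Nat.cast_ne_zero.mpr R.pos.ne'
        have h2 : ((R.num:ℚ)/(R.den:ℚ)) * (R.den:ℚ) = R * (R.den:ℚ) := by
          rw [Rat.num_div_den]
        rw [div_mul_cancel₀ _ hden] at h2
        rw [hmQ, hndef]; exact h2
      have cop : IsCoprime m n := by
        rw [Int.isCoprime_iff_gcd_eq_one]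
        have h := R.reduced
        simp only [Int.gcd, hndef, hmdef, Int.natAbs_natCast]
        exact Nat.Coprime.symm h
      have hlt : n ^ 2 < m ^ 2 := by
        have hq : ((n:ℚ)) ^ 2 < ((m:ℚ)) ^ 2 := by
          rw [hcast]
          have hmsq : (0:ℚ) < ((m:ℚ)) ^ 2 := by positivity
          nlinarith [mul_pos (by linarith : (0:ℚ) < 1 - R ^ 2) hmsq]
        exact_mod_cast hq
      have hA : ∃ a : ℤ, a ^ 2 = 2*m*(m+n)*(2*m^2 - n^2)*(m^2+n^2) := by
        apply int_sq_of_rat_sq (y := 2 * x₁ * (m:ℚ) * ((m:ℚ)^2 + (n:ℚ)^2))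
        push_cast
        rw [hcast]
        linear_combination (2 * (m:ℚ)^6 * (1 + R^2)) * hx1m
      have hB : ∃ b : ℤ, b ^ 2 = 2*m*(m-n)*(2*m^2 - n^2)*(m^2+n^2) := by
        apply int_sq_of_rat_sq (y := 2 * x₂ * (m:ℚ) * ((m:ℚ)^2 + (n:ℚ)^2))
        push_cast
        rw [hcast]
        linear_combination (2 * (m:ℚ)^6 * (1 + R^2)) * hx2m
      rcases hn0.lt_or_gt with hneg | hpos
      · refine key_lemma m (-n) hm (by linarith) (by rw [neg_pow]; simpa using hlt) cop.neg_right ?_ ?_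
        · obtain ⟨b, hb⟩ := hB
          exact ⟨b, by rw [hb]; ring⟩
        · obtain ⟨a, ha⟩ := hA
          exact ⟨a, by rw [ha]; ring⟩
      · exact key_lemma m n hm hpos hlt cop hA hB
  · intro h
    simp only [Set.mem_insert_iff, Set.mem_singleton_iff, Prod.mk.injEq] at h
    rcases h with ⟨h1, h2⟩ | ⟨h1, h2⟩ | ⟨h1, h2⟩ | ⟨h1, h2⟩ | ⟨h1, h2⟩ <;>
      subst h1 <;> subst h2 <;> norm_num
end

section
/- For rational numbers x₁, x₂, the equation (x₁⁴ + x₂⁴)(4x₁² + 4x₂² + 5) = 6(x₁² + x₂²)² holds if and only if (x₁, x₂) ∈ {(−1/2, 0), (0, −1/2), (0, 0), (0, 1/2), (1/2, 0)}. -/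
lemma coprime_of_no_prime_dvd (A B : ℤ)
    (h : ∀ ℓ : ℕ, ℓ.Prime → (ℓ:ℤ) ∣ A → (ℓ:ℤ) ∣ B → False) : IsCoprime A B := by
  rw [Int.isCoprime_iff_gcd_eq_one]
  by_contra hg
  obtain ⟨ℓ, hpr, hdvd⟩ := Nat.exists_prime_and_dvd hg
  have h1 : (ℓ:ℤ) ∣ A := dvd_trans (Int.natCast_dvd_natCast.mpr hdvd) (Int.gcd_dvd_left A B)
  have h2 : (ℓ:ℤ) ∣ B := dvd_trans (Int.natCast_dvd_natCast.mpr hdvd) (Int.gcd_dvd_right A B)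
  exact h ℓ hpr h1 h2

lemma zmod3aux : ∀ a b : ZMod 3, a^4 + 16*b^4 = 0 → a = 0 ∧ b = 0 := by decide

lemma lemA (u v W : ℤ) (hu : Odd u) (hv : v ≠ 0) (hco : IsCoprime u v) :
    (u^2+4*v^2) * (u^4+16*v^4) * (u^4+48*u^2*v^2+16*v^4) ≠ W^2 := by
  intro hW
  have hu0 : u ≠ 0 := by rintro rfl; exact (by decide : ¬ Odd (0:ℤ)) hu
  have huodd : ¬ (2:ℤ) ∣ u := by rw [Int.two_dvd_ne_zero]; exact Int.odd_iff.mp hu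
  have hg2odd : ¬ (2:ℤ) ∣ (u^4+16*v^4) := by
    intro h2
    have : (2:ℤ) ∣ u^4 := by
      have e : u^4 = (u^4+16*v^4) - 2*(8*v^4) := by ring
      rw [e]; exact dvd_sub h2 (Dvd.intro _ rfl)
    exact huodd (Int.prime_two.dvd_of_dvd_pow this)
  have unitcontra : ∀ ℓ : ℕ, ℓ.Prime → (ℓ:ℤ) ∣ u → (ℓ:ℤ) ∣ v → False := by
    intro ℓ hpr hdu hdv
    have hun := hco.isUnit_of_dvd' hdu hdv
    rw [Int.isUnit_iff] at hun
    rcases hun with h | h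
    · have : ℓ = 1 := by exact_mod_cast h
      exact hpr.one_lt.ne' this
    · have : (0:ℤ) ≤ (ℓ:ℤ) := Int.natCast_nonneg ℓ
      omega
  -- ℓ prime ∣ g2 implies ℓ ≠ 2
  have hne2 : ∀ ℓ : ℕ, ℓ.Prime → (ℓ:ℤ) ∣ (u^4+16*v^4) → ℓ ≠ 2 := by
    intro ℓ hpr hd h2; subst h2; exact hg2odd (by exact_mod_cast hd)
  have cop1 : IsCoprime (u^4+16*v^4) (u^2+4*v^2) := by
    apply coprime_of_no_prime_dvd
    intro ℓ hpr h1 h2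
    have hprZ : Prime (ℓ:ℤ) := Nat.prime_iff_prime_int.mp hpr
    have d32 : (ℓ:ℤ) ∣ 2^5 * v^4 := by
      have e : 2^5 * v^4 = (u^4+16*v^4) - (u^2+4*v^2)*(u^2-4*v^2) := by ring
      rw [e]; exact dvd_sub h1 (h2.mul_right _)
    have hdv : (ℓ:ℤ) ∣ v := by
      rcases hprZ.dvd_mul.mp d32 with h | h
      · exfalso
        have : (ℓ:ℤ) ∣ 2 := hprZ.dvd_of_dvd_pow h
        have hl2 : ℓ ∣ 2 := by exact_mod_cast this
        have := (Nat.prime_dvd_prime_iff_eq hpr Nat.prime_two).mp hl2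
        exact hne2 ℓ hpr h1 this
      · exact hprZ.dvd_of_dvd_pow h
    have hdu : (ℓ:ℤ) ∣ u := by
      have : (ℓ:ℤ) ∣ u^4 := by
        have e : u^4 = (u^4+16*v^4) - 16*v^4 := by ring
        rw [e]; exact dvd_sub h1 (Dvd.dvd.mul_left (hdv.pow (by norm_num)) 16)
      exact hprZ.dvd_of_dvd_pow this
    exact unitcontra ℓ hpr hdu hdv
  have cop2 : IsCoprime (u^4+16*v^4) (u^4+48*u^2*v^2+16*v^4) := by
    apply coprime_of_no_prime_dvd
    intro ℓ hpr h1 h2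
    have hprZ : Prime (ℓ:ℤ) := Nat.prime_iff_prime_int.mp hpr
    have d48 : (ℓ:ℤ) ∣ 48 * (u^2*v^2) := by
      have e : 48*(u^2*v^2) = (u^4+48*u^2*v^2+16*v^4) - (u^4+16*v^4) := by ring
      rw [e]; exact dvd_sub h2 h1
    rcases hprZ.dvd_mul.mp d48 with h | h
    · -- ℓ ∣ 48 = 2^4*3
      have h48 : (ℓ:ℤ) ∣ 2^4 * 3 := by norm_num at h ⊢; exact h
      rcases hprZ.dvd_mul.mp h48 with h' | h'
      · have : (ℓ:ℤ) ∣ 2 := hprZ.dvd_of_dvd_pow h'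
        have hl2 : ℓ ∣ 2 := by exact_mod_cast this
        exact hne2 ℓ hpr h1 ((Nat.prime_dvd_prime_iff_eq hpr Nat.prime_two).mp hl2)
      · have hl3 : ℓ ∣ 3 := by exact_mod_cast h'
        have hl3' : ℓ = 3 := (Nat.prime_dvd_prime_iff_eq hpr Nat.prime_three).mp hl3
        subst hl3'
        -- mod 3 argument
        have hcast : ((u : ZMod 3))^4 + 16*((v : ZMod 3))^4 = 0 := by
          have : ((u^4+16*v^4 : ℤ) : ZMod 3) = 0 := by
            rw [ZMod.intCast_zmod_eq_zero_iff_dvd]; exact_mod_cast h1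
          push_cast at this; linear_combination this
        obtain ⟨hu3, hv3⟩ := zmod3aux _ _ hcast
        rw [ZMod.intCast_zmod_eq_zero_iff_dvd] at hu3 hv3
        exact unitcontra 3 Nat.prime_three (by exact_mod_cast hu3) (by exact_mod_cast hv3)
    · rcases hprZ.dvd_mul.mp h with h' | h'
      · have hdu : (ℓ:ℤ) ∣ u := hprZ.dvd_of_dvd_pow h'
        have hdv : (ℓ:ℤ) ∣ v := by
          have d16 : (ℓ:ℤ) ∣ 16 * v^4 := by
            have e : 16*v^4 = (u^4+16*v^4) - u*u^3 := by ring
            rw [e]; exact dvd_sub h1 (hdu.mul_right _)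
          rcases hprZ.dvd_mul.mp d16 with h'' | h''
          · exfalso
            have : (ℓ:ℤ) ∣ 2 := by
              have : (ℓ:ℤ) ∣ 2^4 := by norm_num at h'' ⊢; exact h''
              exact hprZ.dvd_of_dvd_pow this
            have hl2 : ℓ ∣ 2 := by exact_mod_cast this
            exact hne2 ℓ hpr h1 ((Nat.prime_dvd_prime_iff_eq hpr Nat.prime_two).mp hl2)
          · exact hprZ.dvd_of_dvd_pow h''
        exact unitcontra ℓ hpr hdu hdv
      · have hdv : (ℓ:ℤ) ∣ v := hprZ.dvd_of_dvd_pow h'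
        have hdu : (ℓ:ℤ) ∣ u := by
          have : (ℓ:ℤ) ∣ u^4 := by
            have e : u^4 = (u^4+16*v^4) - 16*v^4 := by ring
            rw [e]; exact dvd_sub h1 (Dvd.dvd.mul_left (hdv.pow (by norm_num)) 16)
          exact hprZ.dvd_of_dvd_pow this
        exact unitcontra ℓ hpr hdu hdv
  -- extract: g2 is a perfect square
  have cop : IsCoprime (u^4+16*v^4) ((u^2+4*v^2)*(u^4+48*u^2*v^2+16*v^4)) :=
    cop1.mul_right cop2
  have heq : (u^4+16*v^4) * ((u^2+4*v^2)*(u^4+48*u^2*v^2+16*v^4)) = W^2 := by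
    linear_combination hW
  obtain ⟨c, hc | hc⟩ := Int.sq_of_isCoprime cop heq
  · exact not_fermat_42 hu0 (by simpa using mul_ne_zero two_ne_zero hv : (2*v:ℤ) ≠ 0)
      (show u^4 + (2*v)^4 = c^2 by linear_combination hc)
  · have hpos : (0:ℤ) < u^4+16*v^4 := by positivity
    nlinarith [sq_nonneg c]

lemma zmod16aux : ∀ a b c : ZMod 16,
    ((2*a+1)^2+(2*b+1)^2) * ((2*a+1)^4+(2*b+1)^4) *
      ((2*a+1)^4+12*(2*a+1)^2*(2*b+1)^2+(2*b+1)^4) ≠ c^2 := by decide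



lemma step2 (V G : ℤ) (h : V^2 = 1024 * G) : ∃ V₁, V = 32*V₁ ∧ V₁^2 = G := by
  have hdvd : (32:ℤ)^2 ∣ V^2 := ⟨G, by linarith⟩
  obtain ⟨V₁, rfl⟩ := (Int.pow_dvd_pow_iff two_ne_zero).mp hdvd
  exact ⟨V₁, rfl, by nlinarith⟩

lemma keylemma (p q W : ℤ) (hp : p ≠ 0) (hq : q ≠ 0) (hco : IsCoprime p q) :
    (p^2+16*q^2) * (p^4+256*q^4) * (p^4+192*p^2*q^2+256*q^4) ≠ W^2 := by
  intro hW
  rcases Int.even_or_odd p with hpe | hpo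
  case inr =>
    refine lemA p (2*q) W hpo (by simpa using hq)
      (IsCoprime.mul_right ?_ hco) ?_
    · exact ((Prime.coprime_iff_not_dvd Int.prime_two).mpr
        (by rw [Int.two_dvd_ne_zero]; exact Int.odd_iff.mp hpo)).symm
    · linear_combination hW
  case inl =>
  obtain ⟨p₁, rfl⟩ : ∃ p₁, p = 2*p₁ := by obtain ⟨r, hr⟩ := hpe; exact ⟨r, by omega⟩
  have hp₁ : p₁ ≠ 0 := by simpa using hp
  have hqodd : Odd q := by
    rcases Int.even_or_odd q with hqe | h; swap; · exact h
    exfalso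
    obtain ⟨r, hr⟩ := hqe
    have := hco.isUnit_of_dvd' ⟨p₁, rfl⟩ ⟨r, by omega⟩
    rw [Int.isUnit_iff] at this; omega
  have hco₁ : IsCoprime p₁ q := IsCoprime.of_mul_left_right (by rwa [mul_comm] at hco)
  obtain ⟨W₁, rfl, hW₁⟩ := step2 W
      ((p₁^2+4*q^2) * (p₁^4+16*q^4) * (p₁^4+48*p₁^2*q^2+16*q^4))
      (by linear_combination -hW)
  rcases Int.even_or_odd p₁ with hp1e | hp1o
  case inr =>
    exact lemA p₁ q W₁ hp1o hq hco₁ hW₁.symm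
  case inl =>
  obtain ⟨p₂, rfl⟩ : ∃ p₂, p₁ = 2*p₂ := by obtain ⟨r, hr⟩ := hp1e; exact ⟨r, by omega⟩
  have hp₂ : p₂ ≠ 0 := by simpa using hp₁
  have hco₂ : IsCoprime p₂ q := IsCoprime.of_mul_left_right (by rwa [mul_comm] at hco₁)
  obtain ⟨W₂, rfl, hW₂⟩ := step2 W₁
      ((p₂^2+q^2) * (p₂^4+q^4) * (p₂^4+12*p₂^2*q^2+q^4))
      (by linear_combination hW₁)
  rcases Int.even_or_odd p₂ with hp2e | hp2o
  case inr =>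
    -- p₂ odd, q odd : ZMod 16 contradiction
    obtain ⟨a, ha⟩ := hp2o
    obtain ⟨b, hb⟩ := hqodd
    apply zmod16aux (a : ZMod 16) (b : ZMod 16) (W₂ : ZMod 16)
    have := congrArg (Int.cast : ℤ → ZMod 16) hW₂
    push_cast [ha, hb] at this ⊢
    linear_combination -this
  case inl =>
  obtain ⟨p₃, rfl⟩ : ∃ p₃, p₂ = 2*p₃ := by obtain ⟨r, hr⟩ := hp2e; exact ⟨r, by omega⟩
  have hp₃ : p₃ ≠ 0 := by simpa using hp₂
  have hco₃ : IsCoprime q p₃ :=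
    (IsCoprime.of_mul_left_right (by rwa [mul_comm] at hco₂)).symm
  exact lemA q p₃ W₂ hqodd hp₃ hco₃ (by linear_combination -hW₂)


lemma rat_sq_int (a : ℚ) (n : ℤ) (hn : a^2 = (n:ℚ)) : ∃ W : ℤ, n = W^2 := by
  have hd : a.den = 1 := by
    have h2 : (a^2).den = a.den^2 := Rat.den_pow a 2
    rw [hn, Rat.den_intCast] at h2
    nlinarith [a.den_pos]
  refine ⟨a.num, ?_⟩
  have ha : (a.num : ℚ) = a := Rat.den_eq_one_iff a |>.mp hd
  have : ((a.num^2 : ℤ) : ℚ) = (n:ℚ) := by push_cast [ha]; exact hn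
  exact_mod_cast this.symm

lemma not_sq_14 (a : ℚ) : a^2 ≠ 14 := by
  intro h
  obtain ⟨W, hW⟩ := rat_sq_int a 14 (by exact_mod_cast h)
  have h1 : W.natAbs^2 = 14 := by
    have := congrArg Int.natAbs hW
    simpa [Int.natAbs_pow] using this.symm
  have h2 : W.natAbs ≤ 14 := by nlinarith
  interval_cases h3 : W.natAbs <;> omega




lemma no_nontrivial (x y : ℚ) (hx : x ≠ 0) (hy : y ≠ 0)
    (hE : (x^4+y^4)*(4*x^2+4*y^2+5) = 6*(x^2+y^2)^2) : False := by
  rcases eq_or_ne (x+y) 0 with hxy | hxy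
  · -- y = -x : leads to 16x² = 14
    have hyx : y = -x := by linarith
    subst hyx
    have hfac : x^4*(16*x^2-14) = 0 := by linear_combination hE
    rcases mul_eq_zero.mp hfac with h0 | h0
    · exact hx (by simpa using pow_eq_zero_iff (n := 4) (by norm_num) |>.mp h0)
    · exact not_sq_14 (4*x) (by nlinarith)
  · have hm : x*y ≠ 0 := mul_ne_zero hx hy
    have hsne : x^2+y^2 ≠ 0 := by positivity
    have hE2 : 2*(x*y)^2*(4*(x^2+y^2)+5) = (x^2+y^2)^2*(4*(x^2+y^2)-1) := by
      linear_combination -hE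
    have h41 : 0 < 4*(x^2+y^2)-1 := by
      have hm2 : 0 < (x*y)^2 := by positivity
      have hs2 : 0 < (x^2+y^2)^2 := by positivity
      nlinarith [mul_pos hm2 (show (0:ℚ) < 4*(x^2+y^2)+5 by positivity)]
    have h41' : 4*(x^2+y^2)-1 ≠ 0 := ne_of_gt h41
    obtain ⟨t, ht_def⟩ : ∃ t : ℚ, t = 2*(x^2+y^2)/(x*y) := ⟨_, rfl⟩
    have A1 : t*(x*y) = 2*(x^2+y^2) := by rw [ht_def]; field_simp
    have A2 : t^2*(4*(x^2+y^2)-1) = 8*(4*(x^2+y^2)+5) := by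
      have h2 : t^2*(4*(x^2+y^2)-1)*(x*y)^2 = 8*(4*(x^2+y^2)+5)*(x*y)^2 := by
        linear_combination ((4*(x^2+y^2)-1)*(t*(x*y)+2*(x^2+y^2)))*A1 - 4*hE2
      exact mul_right_cancel₀ (pow_ne_zero 2 hm) h2
    have P1 : t*(x+y)^2 = (x^2+y^2)*(t+4) := by linear_combination 2*A1
    have P2 : t*(x-y)^2 = (x^2+y^2)*(t-4) := by linear_combination -2*A1
    obtain ⟨r, hr_def⟩ : ∃ r : ℚ, r = t*(x^2-y^2)/(x^2+y^2) := ⟨_, rfl⟩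
    have A3 : r*(x^2+y^2) = t*(x^2-y^2) := by rw [hr_def]; field_simp
    have Hr : r^2 = t^2-16 := by
      have h2 : r^2*(x^2+y^2)^2 = (t^2-16)*(x^2+y^2)^2 := by
        linear_combination (r*(x^2+y^2) + t*(x^2-y^2))*A3 + (t*(x-y)^2)*P1 + ((x^2+y^2)*(t+4))*P2
      exact mul_right_cancel₀ (pow_ne_zero 2 hsne) h2
    obtain ⟨h, hh_def⟩ : ∃ h : ℚ, h = t - r := ⟨_, rfl⟩
    have Hh : h^2+16 = 2*t*h := by rw [hh_def]; linear_combination Hr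
    have hne : h ≠ 0 := by intro h0; rw [h0] at Hh; norm_num at Hh
    have Q1 : (h+4)^2 = 2*h*(t+4) := by linear_combination Hh
    have b1 : (t^2-8)*(4*(x^2+y^2)-1) = 48 := by linear_combination A2
    have b2 : (t^2+40)*(4*(x^2+y^2)-1) = 192*(x^2+y^2) := by linear_combination A2
    have c1 : h^4+256 = 4*h^2*(t^2-8) := by linear_combination (h^2+16+2*t*h)*Hh
    have c2 : h^4+192*h^2+256 = 4*h^2*(t^2+40) := by linear_combination (h^2+16+2*t*h)*Hh
    obtain ⟨w, hw_def⟩ : ∃ w : ℚ, w = 384*h^2*(h+4)*(x^2+y^2)/((x+y)*(4*(x^2+y^2)-1)) := ⟨_, rfl⟩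
    have hws : w*((x+y)*(4*(x^2+y^2)-1)) = 384*h^2*(h+4)*(x^2+y^2) := by
      rw [hw_def]; field_simp
    have key : ((h^2+16)*(h^4+256)*(h^4+192*h^2+256)) * ((x+y)*(4*(x^2+y^2)-1))^2
        = (384*h^2*(h+4)*(x^2+y^2))^2 := by
      rw [Hh, c1, c2]
      linear_combination 32*t*h^5*(x+y)^2*((t^2+40)*(4*(x^2+y^2)-1))*b1
        + 1536*t*h^5*(x+y)^2*b2
        + 294912*(x^2+y^2)*h^5*P1
        - 147456*(x^2+y^2)^2*h^4*Q1
    have Fh : (h^2+16)*(h^4+256)*(h^4+192*h^2+256) = w^2 := by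
      have hne2 : (x+y)*(4*(x^2+y^2)-1) ≠ 0 := mul_ne_zero hxy h41'
      have h2 : ((h^2+16)*(h^4+256)*(h^4+192*h^2+256)) * ((x+y)*(4*(x^2+y^2)-1))^2
          = w^2 * ((x+y)*(4*(x^2+y^2)-1))^2 := by
        rw [key]
        linear_combination -(w*((x+y)*(4*(x^2+y^2)-1)) + 384*h^2*(h+4)*(x^2+y^2))*hws
      exact mul_right_cancel₀ (pow_ne_zero 2 hne2) h2
    -- bridge to integers
    have hp0 : h.num ≠ 0 := Rat.num_ne_zero.mpr hne
    have hq0 : (h.den : ℤ) ≠ 0 := Int.natCast_ne_zero.mpr h.den_nz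
    have hcop : IsCoprime h.num (h.den : ℤ) := by
      rw [Int.isCoprime_iff_gcd_eq_one]
      simpa [Int.gcd] using h.reduced
    have hdenQ : ((h.den : ℚ)) ≠ 0 := Nat.cast_ne_zero.mpr h.den_nz
    have e1 : (h.num : ℚ) = h * (h.den : ℚ) := by
      have h0 := Rat.num_div_den h
      rw [div_eq_iff hdenQ] at h0
      exact h0
    have key2 : (((h.num^2+16*(h.den:ℤ)^2) * (h.num^4+256*(h.den:ℤ)^4)
        * (h.num^4+192*h.num^2*(h.den:ℤ)^2+256*(h.den:ℤ)^4) : ℤ) : ℚ)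
        = (w*((h.den:ℤ):ℚ)^5)^2 := by
      push_cast
      rw [e1]
      linear_combination ((h.den:ℚ))^10 * Fh
    obtain ⟨W, hW⟩ := rat_sq_int _ _ key2.symm
    exact keylemma h.num (h.den : ℤ) W hp0 hq0 hcop hW

/-- Theorem 2.14 (ii): classification of the rational points of
`(x₁⁴ + x₂⁴)(4x₁² + 4x₂² + 5) = 6(x₁² + x₂²)²`. -/
theorem stmt_8 (x₁ x₂ : ℚ) :
    (x₁ ^ 4 + x₂ ^ 4) * (4 * x₁ ^ 2 + 4 * x₂ ^ 2 + 5) = 6 * (x₁ ^ 2 + x₂ ^ 2) ^ 2 ↔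
    (x₁, x₂) ∈ ({(-1/2, 0), (0, -1/2), (0, 0), (0, 1/2), (1/2, 0)} : Set (ℚ × ℚ)) := by
  simp only [Set.mem_insert_iff, Set.mem_singleton_iff, Prod.mk.injEq]
  constructor
  · intro hE
    by_cases h1 : x₁ = 0
    · by_cases h2 : x₂ = 0
      · tauto
      · subst h1
        have hfac : x₂^4*((2*x₂-1)*(2*x₂+1)) = 0 := by linear_combination hE
        rcases mul_eq_zero.mp hfac with h0 | h0
        · exact absurd (pow_eq_zero_iff (by norm_num : 4 ≠ 0) |>.mp h0) h2
        · rcases mul_eq_zero.mp h0 with h0 | h0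
          · have : x₂ = 1/2 := by linarith
            tauto
          · have : x₂ = -1/2 := by linarith
            tauto
    · by_cases h2 : x₂ = 0
      · subst h2
        have hfac : x₁^4*((2*x₁-1)*(2*x₁+1)) = 0 := by linear_combination hE
        rcases mul_eq_zero.mp hfac with h0 | h0
        · exact absurd (pow_eq_zero_iff (by norm_num : 4 ≠ 0) |>.mp h0) h1
        · rcases mul_eq_zero.mp h0 with h0 | h0
          · have : x₁ = 1/2 := by linarith
            tauto
          · have : x₁ = -1/2 := by linarith
            tauto
      · exact absurd hE (fun hE => (no_nontrivial x₁ x₂ h1 h2 hE))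
  · rintro (⟨rfl, rfl⟩ | ⟨rfl, rfl⟩ | ⟨rfl, rfl⟩ | ⟨rfl, rfl⟩ | ⟨rfl, rfl⟩) <;> norm_num
end

section
/- For each n ∈ {3, 4, 5}, there do not exist n pairwise distinct rational numbers x₁, …, xₙ satisfying Σᵢ xᵢ = 0, Σᵢ xᵢ² = n/2, Σᵢ xᵢ³ = 0, Σᵢ xᵢ⁴ = 3n/4, and Σᵢ xᵢ⁵ = 0. -/
/-!
By Newton's identities the five power sums fix the elementary symmetric functions of the
`N` points: `e₁ = e₃ = e₅ = 0`, `e₂ = -N/4` and `e₄ = N(N-6)/32`. For `N = 3` this contradicts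
`e₄ = 0`, which holds for fewer than four points.
Otherwise every point is a root of `∏ (X - xⱼ) = ∑ (-1)ʲ eⱼ X^(N-j)`, which is
`X⁴ - X² - 1/4` for `N = 4` and `X (X⁴ - 5/4 X² - 5/32)` for `N = 5`. A nonzero rational root
would give `(2x² - 1)² = 2` resp. `(8x² - 5)² = 35`, so for `N = 4` there is no rational point
and for `N = 5` all points are `0`.
-/

open MvPolynomial Finset

theorem Rat.sq_ne_natCast_of_lt_of_lt (q : ℚ) {m n : ℕ} (hlo : m * m < n)
    (hhi : n < (m + 1) * (m + 1)) : q ^ 2 ≠ n := by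
  intro hq
  obtain ⟨t, ht⟩ := Rat.isSquare_natCast_iff.mp ⟨q, by rw [← hq, sq]⟩
  exact Nat.not_exists_sq hlo hhi ⟨t, ht.symm⟩

namespace MvPolynomial

variable {σ R : Type*} [Fintype σ] [CommRing R]

theorem eval_esymm_eq_zero_of_card_lt (x : σ → R) {k : ℕ} (hk : Fintype.card σ < k) :
    eval x (esymm σ R k) = 0 := by
  simp [esymm, powersetCard_eq_empty.mpr (show #(univ : Finset σ) < k from hk)]

theorem sum_esymm_mul_pow_eq_zero (x : σ → R) (i : σ) :
    ∑ j ∈ range (Fintype.card σ + 1),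
      (-1) ^ j * eval x (esymm σ R j) * x i ^ (Fintype.card σ - j) = 0 := by
  have hroot :
      (((univ.val.map x).map fun t ↦ Polynomial.X - Polynomial.C t).prod).eval (x i) = 0 := by
    rw [Polynomial.eval_multiset_prod]
    exact Multiset.prod_eq_zero (by simpa using ⟨i, sub_self _⟩)
  rw [Multiset.prod_X_sub_X_eq_sum_esymm] at hroot
  simpa [Polynomial.eval_finsetSum, ← aeval_esymm_eq_multiset_esymm σ R, coe_aeval_eq_eval,
    mul_assoc] using hroot

theorem eval_mul_esymm_eq_sum (x : σ → R) (k : ℕ) :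
    k * eval x (esymm σ R k) = (-1) ^ (k + 1) * ∑ a ∈ antidiagonal k with a.1 < k,
      (-1) ^ a.1 * eval x (esymm σ R a.1) * ∑ i, x i ^ a.2 := by
  simpa [psum] using congrArg (eval x) (mul_esymm_eq_sum σ R k)

end MvPolynomial

def HasHermitePowerSums {σ K : Type*} [Fintype σ] [Field K] (x : σ → K) : Prop :=
  ∑ i, x i = 0 ∧ ∑ i, x i ^ 2 = Fintype.card σ / 2 ∧ ∑ i, x i ^ 3 = 0 ∧
    ∑ i, x i ^ 4 = 3 * Fintype.card σ / 4 ∧ ∑ i, x i ^ 5 = 0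

namespace HasHermitePowerSums

section Field

variable {σ K : Type*} [Fintype σ] [Field K] [CharZero K]

theorem eval_esymm {x : σ → K} (h : HasHermitePowerSums x) :
    eval x (esymm σ K 1) = 0 ∧ eval x (esymm σ K 2) = -Fintype.card σ / 4 ∧
      eval x (esymm σ K 3) = 0 ∧
      eval x (esymm σ K 4) = Fintype.card σ * (Fintype.card σ - 6) / 32 ∧
      eval x (esymm σ K 5) = 0 := by
  obtain ⟨p₁, p₂, p₃, p₄, p₅⟩ := h
  have e₁ : eval x (esymm σ K 1) = 0 := by simpa using p₁
  have n₂ := eval_mul_esymm_eq_sum x 2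
  have n₃ := eval_mul_esymm_eq_sum x 3
  have n₄ := eval_mul_esymm_eq_sum x 4
  have n₅ := eval_mul_esymm_eq_sum x 5
  simp [sum_filter, Nat.sum_antidiagonal_eq_sum_range_succ_mk, sum_range_succ,
    p₁, p₂, p₃, p₄, p₅] at n₂ n₃ n₄ n₅
  have e₂ : eval x (esymm σ K 2) = -Fintype.card σ / 4 := by linear_combination n₂ / 2
  refine ⟨e₁, e₂, n₃, ?_, ?_⟩
  · linear_combination n₄ / 4 - (Fintype.card σ / 8 : K) * e₂
  · linear_combination n₅ / 5 - (Fintype.card σ / 10 : K) * n₃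

theorem four_le_card [Nonempty σ] {x : σ → K} (h : HasHermitePowerSums x) :
    4 ≤ Fintype.card σ := by
  by_contra! hlt
  have e₄ := h.eval_esymm.2.2.2.1
  rw [eval_esymm_eq_zero_of_card_lt x hlt] at e₄
  have hpos : (Fintype.card σ : K) ≠ 0 := by simp
  have hne6 : (Fintype.card σ : K) - 6 ≠ 0 := by
    rw [sub_ne_zero]
    exact_mod_cast (hlt.trans (by norm_num)).ne
  exact mul_ne_zero hpos hne6 (by linear_combination -32 * e₄)

end Field

variable {σ : Type*} [Fintype σ] {x : σ → ℚ}

theorem card_ne_four (h : HasHermitePowerSums x) : Fintype.card σ ≠ 4 := by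
  intro h4
  obtain ⟨i⟩ : Nonempty σ := Fintype.card_pos_iff.mp (by omega)
  obtain ⟨e₁, e₂, e₃, e₄, -⟩ := h.eval_esymm
  have hroot : x i ^ 4 - x i ^ 2 - 1 / 4 = 0 := by
    have := sum_esymm_mul_pow_eq_zero x i
    simp only [h4, sum_range_succ, sum_range_zero, esymm_zero, map_one, e₁, e₂, e₃, e₄] at this
    norm_num at this
    linear_combination this
  have hsq : (2 * x i ^ 2 - 1) ^ 2 = ((2 : ℕ) : ℚ) := by linear_combination 4 * hroot
  exact Rat.sq_ne_natCast_of_lt_of_lt _ (m := 1) (by norm_num) (by norm_num) hsq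

theorem eq_zero_of_card_eq_five (h : HasHermitePowerSums x) (h5 : Fintype.card σ = 5) (i : σ) :
    x i = 0 := by
  obtain ⟨e₁, e₂, e₃, e₄, e₅⟩ := h.eval_esymm
  have hroot : x i ^ 5 - 5 / 4 * x i ^ 3 - 5 / 32 * x i = 0 := by
    have := sum_esymm_mul_pow_eq_zero x i
    simp only [h5, sum_range_succ, sum_range_zero, esymm_zero, map_one, e₁, e₂, e₃, e₄, e₅] at this
    norm_num at this
    linear_combination this
  have hfactor : x i * ((8 * x i ^ 2 - 5) ^ 2 - 35) = 0 := by linear_combination 64 * hroot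
  refine (mul_eq_zero.mp hfactor).resolve_right fun h35 ↦ ?_
  have hsq : (8 * x i ^ 2 - 5) ^ 2 = ((35 : ℕ) : ℚ) := by linear_combination h35
  exact Rat.sq_ne_natCast_of_lt_of_lt _ (m := 5) (by norm_num) (by norm_num) hsq

end HasHermitePowerSums

/-- Theorem 2.15: for `n ∈ {3,4,5}` there is no rational 5-design with `n` points for
the Hermite measure, i.e. no `n` pairwise distinct rationals with the given power sums. -/
theorem stmt_9 (n : ℕ) (hn : n ∈ ({3, 4, 5} : Set ℕ)) :
    ¬ ∃ x : Fin n → ℚ, Function.Injective x ∧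
      ∑ i, x i = 0 ∧
      ∑ i, (x i) ^ 2 = (n : ℚ) / 2 ∧
      ∑ i, (x i) ^ 3 = 0 ∧
      ∑ i, (x i) ^ 4 = 3 * (n : ℚ) / 4 ∧
      ∑ i, (x i) ^ 5 = 0 := by
  rintro ⟨x, hinj, hsums⟩
  have h : HasHermitePowerSums x := by
    simpa only [HasHermitePowerSums, Fintype.card_fin] using hsums
  rcases hn with rfl | rfl | rfl
  · exact absurd h.four_le_card (by simp)
  · exact h.card_ne_four (Fintype.card_fin 4)
  · have hzero (i : Fin 5) := h.eq_zero_of_card_eq_five (Fintype.card_fin 5) i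
    exact absurd (hinj ((hzero 0).trans (hzero 1).symm)) (by decide)
end

section
/- Let K be an algebraically closed field of characteristic zero and let α, β ∈ K be nonzero. Consider F₁(X₀,X₁,X₂,X₃) = X₁² + X₂² + X₃² − αX₀² and F₂(X₀,X₁,X₂,X₃) = X₁⁴ + X₂⁴ + X₃⁴ − βX₀⁴, with Jacobian matrix J(x) = [[−2αx₀, 2x₁, 2x₂, 2x₃], [−4βx₀³, 4x₁³, 4x₂³, 4x₃³]]. Then J(x) has rank 2 for every nonzero x = (x₀,x₁,x₂,x₃) ∈ K⁴ satisfying F₁(x) = F₂(x) = 0 if and only if α² ∉ {β, 2β, 3β}. -/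
/-!
Rank drops below 2 exactly when every 2 × 2 minor of the Jacobian vanishes. At a common zero with
`x₀ = 0` the minors force all nonzero `xᵢ²` to be equal, and `F₁ = 0` then says that a positive
multiple of one of them vanishes, which is impossible in characteristic zero. At a common zero with
`x₀ ≠ 0` the minors force `α xᵢ² ∈ {0, β x₀²}`, so `α F₁ = 0` reads `α² = k β` with `k` the number
of `i` for which `α xᵢ² = β x₀²`. Conversely, if `α² = k β` with `1 ≤ k ≤ n`, the point with
`x₀ = 1` and `k` coordinates equal to a square root `s` of `α / k` is a common zero at which the
second row of the Jacobian is `2 s²` times the first.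
-/

open Finset Matrix

theorem Finset.sum_eq_card_filter_nsmul {ι M : Type*} [AddCommMonoid M] [DecidableEq M]
    {s : Finset ι} {f : ι → M} {a : M} (h : ∀ i ∈ s, f i = 0 ∨ f i = a) :
    ∑ i ∈ s, f i = #{i ∈ s | f i = a} • a := by
  rw [← sum_filter_add_sum_filter_not s (f · = a), sum_congr rfl fun i hi => (mem_filter.1 hi).2,
    sum_const, sum_eq_zero fun i hi => ?_, add_zero]
  obtain ⟨his, hia⟩ := mem_filter.1 hi
  exact (h i his).resolve_right hia

theorem Fintype.eq_zero_of_sum_eq_zero_of_forall_ne_zero_eq {ι M : Type*} [Fintype ι]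
    [AddCommMonoid M] [IsAddTorsionFree M] {f : ι → M}
    (hf : ∀ i j, f i ≠ 0 → f j ≠ 0 → f i = f j) (hsum : ∑ i, f i = 0) : f = 0 := by
  classical
  by_contra! hne
  obtain ⟨j, hj⟩ := Function.ne_iff.1 hne
  have hcard : #{i | f i = f j} ≠ 0 := (Finset.card_pos.2 ⟨j, by simp⟩).ne'
  rw [Finset.sum_eq_card_filter_nsmul (a := f j) fun i _ => (em (f i = 0)).imp_right
    fun hi => hf i j hi hj, nsmul_eq_zero_iff_left hj] at hsum
  exact hcard hsum

theorem Matrix.rank_eq_two_of_minor_ne_zero {K m : Type*} [Field K] [Fintype m]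
    (A : Matrix (Fin 2) m K) {i j : m} (h : A 0 i * A 1 j - A 0 j * A 1 i ≠ 0) : A.rank = 2 := by
  refine le_antisymm (by simpa using A.rank_le_card_height) ?_
  have hdet : (A.submatrix id ![i, j]).det ≠ 0 := by simpa [det_fin_two] using h
  calc 2 = (A.submatrix id ![i, j]).rank := by
        rw [rank_of_isUnit _ ((isUnit_iff_isUnit_det _).2 hdet.isUnit), Fintype.card_fin]
    _ ≤ A.rank := rank_submatrix_le A id _

theorem Matrix.rank_ne_two_of_row_eq_smul {K m : Type*} [Field K] [Fintype m]
    (A : Matrix (Fin 2) m K) (c : K) (h : A 1 = c • A 0) : A.rank ≠ 2 := by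
  have hA : A = vecMulVec ![1, c] (A 0) := by
    ext r j
    fin_cases r
    · simp [vecMulVec_apply]
    · simp [vecMulVec_apply, h]
  have := rank_vecMulVec_le ![1, c] (A 0)
  rw [← hA] at this
  omega

namespace DiagonalSystem

variable {K : Type*} [Field K] {n : ℕ}

def F₁ (α : K) (x : Fin (n + 1) → K) : K := ∑ i : Fin n, x i.succ ^ 2 - α * x 0 ^ 2

def F₂ (β : K) (x : Fin (n + 1) → K) : K := ∑ i : Fin n, x i.succ ^ 4 - β * x 0 ^ 4

def jacobian (α β : K) (x : Fin (n + 1) → K) : Matrix (Fin 2) (Fin (n + 1)) K :=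
  Matrix.of ![Fin.cons (-2 * α * x 0) fun i => 2 * x i.succ,
    Fin.cons (-4 * β * x 0 ^ 3) fun i => 4 * x i.succ ^ 3]

variable {α β : K} {x : Fin (n + 1) → K}

@[simp] lemma jacobian_zero_zero : jacobian α β x 0 0 = -2 * α * x 0 := rfl
@[simp] lemma jacobian_one_zero : jacobian α β x 1 0 = -4 * β * x 0 ^ 3 := rfl
@[simp] lemma jacobian_zero_succ (i : Fin n) : jacobian α β x 0 i.succ = 2 * x i.succ := rfl
@[simp] lemma jacobian_one_succ (i : Fin n) : jacobian α β x 1 i.succ = 4 * x i.succ ^ 3 := rfl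

lemma jacobian_fin_four (x : Fin 4 → K) : jacobian α β x =
    !![-2 * α * x 0, 2 * x 1, 2 * x 2, 2 * x 3;
      -4 * β * x 0 ^ 3, 4 * x 1 ^ 3, 4 * x 2 ^ 3, 4 * x 3 ^ 3] := by
  ext i j
  fin_cases i <;> fin_cases j <;> rfl

lemma jacobian_minor_eq_zero_of_rank_ne_two (hr : (jacobian α β x).rank ≠ 2)
    (i j : Fin (n + 1)) :
    jacobian α β x 0 i * jacobian α β x 1 j - jacobian α β x 0 j * jacobian α β x 1 i = 0 :=
  not_not.1 fun h => hr (rank_eq_two_of_minor_ne_zero _ h)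

variable [CharZero K]

lemma mul_sq_eq_zero_or_eq_of_rank_ne_two (hr : (jacobian α β x).rank ≠ 2) (h0 : x 0 ≠ 0)
    (i : Fin n) : α * x i.succ ^ 2 = 0 ∨ α * x i.succ ^ 2 = β * x 0 ^ 2 := by
  have h := jacobian_minor_eq_zero_of_rank_ne_two hr 0 i.succ
  simp only [jacobian_zero_zero, jacobian_one_zero, jacobian_zero_succ, jacobian_one_succ] at h
  have hminor : x 0 * x i.succ * (β * x 0 ^ 2 - α * x i.succ ^ 2) = 0 := by
    linear_combination h / 8
  rcases mul_eq_zero.1 hminor with h | h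
  · simp_all
  · exact .inr (sub_eq_zero.1 h).symm

lemma sq_eq_sq_of_rank_ne_two (hr : (jacobian α β x).rank ≠ 2) {i j : Fin n}
    (hi : x i.succ ^ 2 ≠ 0) (hj : x j.succ ^ 2 ≠ 0) : x i.succ ^ 2 = x j.succ ^ 2 := by
  have h := jacobian_minor_eq_zero_of_rank_ne_two hr i.succ j.succ
  simp only [jacobian_zero_succ, jacobian_one_succ] at h
  have hminor : x i.succ * x j.succ * (x j.succ ^ 2 - x i.succ ^ 2) = 0 := by
    linear_combination h / 8
  rcases mul_eq_zero.1 hminor with h | h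
  · simp_all
  · exact (sub_eq_zero.1 h).symm

lemma exists_sq_eq_mul_of_rank_ne_two (hα : α ≠ 0) (hx : x ≠ 0) (h₁ : F₁ α x = 0)
    (hr : (jacobian α β x).rank ≠ 2) : ∃ k ∈ Icc 1 n, α ^ 2 = k * β := by
  rw [F₁] at h₁
  have h0 : x 0 ≠ 0 := by
    intro h0
    have hsq : (fun i : Fin n => x i.succ ^ 2) = 0 :=
      Fintype.eq_zero_of_sum_eq_zero_of_forall_ne_zero_eq
        (fun i j => sq_eq_sq_of_rank_ne_two hr) (by simpa [h0] using h₁)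
    exact hx <| funext <| Fin.cases h0 fun i => pow_eq_zero_iff two_ne_zero |>.1 (congrFun hsq i)
  classical
  set k := #{i : Fin n | α * x i.succ ^ 2 = β * x 0 ^ 2}
  have hk : α ^ 2 = k * β := by
    refine mul_right_cancel₀ (pow_ne_zero 2 h0) ?_
    calc α ^ 2 * x 0 ^ 2 = ∑ i : Fin n, α * x i.succ ^ 2 := by
          rw [← mul_sum]; linear_combination -α * h₁
      _ = k • (β * x 0 ^ 2) := sum_eq_card_filter_nsmul (s := univ) fun i _ =>
          mul_sq_eq_zero_or_eq_of_rank_ne_two hr h0 i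
      _ = k * β * x 0 ^ 2 := by rw [nsmul_eq_mul, mul_assoc]
  refine ⟨k, mem_Icc.2 ⟨Nat.one_le_iff_ne_zero.2 fun hk0 => ?_, ?_⟩, hk⟩
  · simp_all
  · exact (card_filter_le _ _).trans (card_univ.trans (Fintype.card_fin n)).le

lemma exists_rank_ne_two_of_sq_eq_mul [IsAlgClosed K] {k : ℕ} (hk : k ∈ Icc 1 n)
    (h : α ^ 2 = k * β) :
    ∃ x : Fin (n + 1) → K, x ≠ 0 ∧ F₁ α x = 0 ∧ F₂ β x = 0 ∧ (jacobian α β x).rank ≠ 2 := by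
  obtain ⟨hk1, hkn⟩ := mem_Icc.1 hk
  have hk0 : (k : K) ≠ 0 := by exact_mod_cast Nat.one_le_iff_ne_zero.1 hk1
  obtain ⟨S, -, hS⟩ := exists_subset_card_eq (s := (univ : Finset (Fin n))) (by simpa using hkn)
  obtain ⟨s, hs⟩ := IsAlgClosed.exists_pow_nat_eq (α / k) two_pos
  replace hs : k * s ^ 2 = α := by rw [hs]; field_simp
  have hβ : β = s ^ 2 * α := mul_left_cancel₀ hk0 (by linear_combination -h - α * hs)
  set x : Fin (n + 1) → K := Fin.cons 1 fun i => if i ∈ S then s else 0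
  have hsum (m : ℕ) (hm : m ≠ 0) : ∑ i : Fin n, x i.succ ^ m = k * s ^ m := by
    simp [x, ite_pow, zero_pow hm, hS]
  refine ⟨x, fun hx => one_ne_zero (congrFun hx 0), ?_, ?_,
    rank_ne_two_of_row_eq_smul _ (2 * s ^ 2) (funext fun j => Fin.cases ?_ (fun i => ?_) j)⟩
  · simp only [F₁, hsum 2 two_ne_zero]
    simp [x, hs]
  · simp only [F₂, hsum 4 (by norm_num)]
    simp [x, hβ, ← hs]
    ring
  · simp [x, hβ]
    ring
  · simp only [jacobian_one_succ, Pi.smul_apply, jacobian_zero_succ, smul_eq_mul, x, Fin.cons_succ]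
    split_ifs <;> ring

theorem forall_rank_jacobian_eq_two_iff [IsAlgClosed K] (hα : α ≠ 0) :
    (∀ x : Fin (n + 1) → K, x ≠ 0 → F₁ α x = 0 → F₂ β x = 0 → (jacobian α β x).rank = 2) ↔
      ∀ k ∈ Icc 1 n, α ^ 2 ≠ k * β := by
  constructor
  · rintro H k hk h
    obtain ⟨x, hx, h₁, h₂, hr⟩ := exists_rank_ne_two_of_sq_eq_mul hk h
    exact hr (H x hx h₁ h₂)
  · intro H x hx h₁ _
    by_contra hr
    obtain ⟨k, hk, h⟩ := exists_sq_eq_mul_of_rank_ne_two hα hx h₁ hr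
    exact H k hk h

end DiagonalSystem

open DiagonalSystem in
theorem stmt_11_general {K : Type*} [Field K] [IsAlgClosed K] [CharZero K]
    (α β : K) (hα : α ≠ 0) :
    (∀ x : Fin 4 → K, x ≠ 0 →
      x 1 ^ 2 + x 2 ^ 2 + x 3 ^ 2 - α * x 0 ^ 2 = 0 →
      x 1 ^ 4 + x 2 ^ 4 + x 3 ^ 4 - β * x 0 ^ 4 = 0 →
      (!![-2 * α * x 0, 2 * x 1, 2 * x 2, 2 * x 3;
          -4 * β * x 0 ^ 3, 4 * x 1 ^ 3, 4 * x 2 ^ 3, 4 * x 3 ^ 3] :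
        Matrix (Fin 2) (Fin 4) K).rank = 2) ↔
    (α ^ 2 ≠ β ∧ α ^ 2 ≠ 2 * β ∧ α ^ 2 ≠ 3 * β) := by
  have key := forall_rank_jacobian_eq_two_iff (n := 3) (β := β) hα
  simp only [F₁, F₂, Fin.sum_univ_three, jacobian_fin_four,
    show Icc 1 3 = {1, 2, 3} from rfl] at key
  simpa using key

/-- Lemma 4.1: the system `{F₁, F₂}` with `F₁ = X₁² + X₂² + X₃² − αX₀²` and
`F₂ = X₁⁴ + X₂⁴ + X₃⁴ − βX₀⁴` is nonsingular (its Jacobian has rank 2 at every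
nonzero common zero) iff `α² ∉ {β, 2β, 3β}`. -/
theorem stmt_11 {K : Type*} [Field K] [IsAlgClosed K] [CharZero K]
    (α β : K) (hα : α ≠ 0) (hβ : β ≠ 0) :
    (∀ x : Fin 4 → K, x ≠ 0 →
      x 1 ^ 2 + x 2 ^ 2 + x 3 ^ 2 - α * x 0 ^ 2 = 0 →
      x 1 ^ 4 + x 2 ^ 4 + x 3 ^ 4 - β * x 0 ^ 4 = 0 →
      (!![-2 * α * x 0, 2 * x 1, 2 * x 2, 2 * x 3;
          -4 * β * x 0 ^ 3, 4 * x 1 ^ 3, 4 * x 2 ^ 3, 4 * x 3 ^ 3] :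
        Matrix (Fin 2) (Fin 4) K).rank = 2) ↔
    (α ^ 2 ≠ β ∧ α ^ 2 ≠ 2 * β ∧ α ^ 2 ≠ 3 * β) :=
  stmt_11_general α β hα
end

section
/- Let x₁, x₂, x₃ be real numbers with 0 < x₁ < x₂ < x₃, and consider the four statements: (P1) x₁² + x₂² + x₃² = 3/2; (P2) x₁⁴ + x₂⁴ + x₃⁴ = 9/8; (P3) x₁ + x₂ − x₃ = 0; (P4) x₁² + x₁x₂ + x₂² = 3/4. If at least two of P1, P2, P3, P4 hold, then all four hold. -/
/-!
Write `Q = x₁² + x₁x₂ + x₂²`. On the plane `x₃ = x₁ + x₂` the identities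
`x₁² + x₂² + (x₁ + x₂)² = 2Q` and `x₁⁴ + x₂⁴ + (x₁ + x₂)⁴ = 2Q²` (Kawada–Wooley) make P1, P2
and P4 all equivalent to `Q = 3/4`; conversely, once `Q = 3/4`, both P1 and P2 say that
`x₃² = (x₁ + x₂)²`, i.e. P3. Finally P1 and P2 together give
`(x₁² + x₂² + x₃²)² = 2(x₁⁴ + x₂⁴ + x₃⁴)`, which by Heron's formula says that the triangle with
sides `x₁, x₂, x₃` is degenerate; since `x₃` is the longest side, `x₃ = x₁ + x₂`.
-/

namespace HilbertKamke

variable {a b c t : ℝ}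

theorem sq_add_sq_add_add_sq (a b : ℝ) :
    a ^ 2 + b ^ 2 + (a + b) ^ 2 = 2 * (a ^ 2 + a * b + b ^ 2) := by
  ring

theorem pow_four_add_pow_four_add_add_pow_four (a b : ℝ) :
    a ^ 4 + b ^ 4 + (a + b) ^ 4 = 2 * (a ^ 2 + a * b + b ^ 2) ^ 2 := by
  ring

theorem sq_add_mul_add_sq_nonneg (a b : ℝ) : 0 ≤ a ^ 2 + a * b + b ^ 2 := by
  nlinarith [sq_nonneg (a + b), sq_nonneg a, sq_nonneg b]

theorem heron_identity (a b c : ℝ) :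
    (a ^ 2 + b ^ 2 + c ^ 2) ^ 2 - 2 * (a ^ 4 + b ^ 4 + c ^ 4) =
      (a + b + c) * (-a + b + c) * (a - b + c) * (a + b - c) := by
  ring

theorem eq_add_of_sq_sum_sq_eq_two_mul_sum_pow_four (ha : 0 < a) (hab : a ≤ b) (hbc : b ≤ c)
    (h : (a ^ 2 + b ^ 2 + c ^ 2) ^ 2 = 2 * (a ^ 4 + b ^ 4 + c ^ 4)) : c = a + b := by
  have hprod : (a + b + c) * (-a + b + c) * (a - b + c) * (a + b - c) = 0 := by
    rw [← heron_identity, h, sub_self]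
  have hpos : (a + b + c) * (-a + b + c) * (a - b + c) ≠ 0 := by
    have : 0 < (a + b + c) * (-a + b + c) * (a - b + c) := by
      apply mul_pos (mul_pos _ _) _ <;> linarith
    exact this.ne'
  linarith [(mul_eq_zero.1 hprod).resolve_left hpos]

theorem sum_sq_eq_iff_of_eq_add (hc : c = a + b) :
    a ^ 2 + b ^ 2 + c ^ 2 = 2 * t ↔ a ^ 2 + a * b + b ^ 2 = t := by
  rw [hc, sq_add_sq_add_add_sq, mul_right_inj' two_ne_zero]

theorem sum_pow_four_eq_iff_of_eq_add (hc : c = a + b) (ht : 0 ≤ t) :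
    a ^ 4 + b ^ 4 + c ^ 4 = 2 * t ^ 2 ↔ a ^ 2 + a * b + b ^ 2 = t := by
  rw [hc, pow_four_add_pow_four_add_add_pow_four, mul_right_inj' two_ne_zero,
    pow_left_inj₀ (sq_add_mul_add_sq_nonneg a b) ht two_ne_zero]

theorem sum_sq_eq_iff_eq_add (hQ : a ^ 2 + a * b + b ^ 2 = t) (hab : 0 ≤ a + b) (hc : 0 ≤ c) :
    a ^ 2 + b ^ 2 + c ^ 2 = 2 * t ↔ c = a + b := by
  rw [← hQ, ← sq_add_sq_add_add_sq, add_right_inj, pow_left_inj₀ hc hab two_ne_zero]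

theorem sum_pow_four_eq_iff_eq_add (hQ : a ^ 2 + a * b + b ^ 2 = t) (hab : 0 ≤ a + b)
    (hc : 0 ≤ c) : a ^ 4 + b ^ 4 + c ^ 4 = 2 * t ^ 2 ↔ c = a + b := by
  rw [← hQ, ← pow_four_add_pow_four_add_add_pow_four, add_right_inj,
    pow_left_inj₀ hc hab four_ne_zero]

end HilbertKamke

open HilbertKamke

/-- Lemma 5.1: for reals `0 < x₁ < x₂ < x₃`, any two of the four statements
P1: `x₁² + x₂² + x₃² = 3/2`, P2: `x₁⁴ + x₂⁴ + x₃⁴ = 9/8`,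
P3: `x₁ + x₂ − x₃ = 0`, P4: `x₁² + x₁x₂ + x₂² = 3/4` imply the other two. -/
theorem stmt_13 (x₁ x₂ x₃ : ℝ) (h0 : 0 < x₁) (h12 : x₁ < x₂) (h23 : x₂ < x₃)
    (P1 : Prop) (P2 : Prop) (P3 : Prop) (P4 : Prop)
    (hP1 : P1 ↔ x₁ ^ 2 + x₂ ^ 2 + x₃ ^ 2 = 3 / 2)
    (hP2 : P2 ↔ x₁ ^ 4 + x₂ ^ 4 + x₃ ^ 4 = 9 / 8)
    (hP3 : P3 ↔ x₁ + x₂ - x₃ = 0)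
    (hP4 : P4 ↔ x₁ ^ 2 + x₁ * x₂ + x₂ ^ 2 = 3 / 4)
    (h : (P1 ∧ P2) ∨ (P1 ∧ P3) ∨ (P1 ∧ P4) ∨ (P2 ∧ P3) ∨ (P2 ∧ P4) ∨ (P3 ∧ P4)) :
    P1 ∧ P2 ∧ P3 ∧ P4 := by
  have hs : 0 ≤ x₁ + x₂ := by linarith
  have hc : 0 ≤ x₃ := by linarith
  rw [show (3 : ℝ) / 2 = 2 * (3 / 4) by norm_num] at hP1
  rw [show (9 : ℝ) / 8 = 2 * (3 / 4) ^ 2 by norm_num] at hP2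
  rw [sub_eq_zero, eq_comm] at hP3
  have h12_3 : P1 → P2 → P3 := fun h1 h2 => hP3.2 <|
    eq_add_of_sq_sum_sq_eq_two_mul_sum_pow_four h0 h12.le h23.le
      (by rw [hP1.1 h1, hP2.1 h2]; norm_num)
  have h3_14 : P3 → (P1 ↔ P4) := fun h3 =>
    hP1.trans <| (sum_sq_eq_iff_of_eq_add (hP3.1 h3)).trans hP4.symm
  have h3_24 : P3 → (P2 ↔ P4) := fun h3 =>
    hP2.trans <| (sum_pow_four_eq_iff_of_eq_add (hP3.1 h3) (by norm_num)).trans hP4.symm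
  have h4_13 : P4 → (P1 ↔ P3) := fun h4 =>
    hP1.trans <| (sum_sq_eq_iff_eq_add (hP4.1 h4) hs hc).trans hP3.symm
  have h4_23 : P4 → (P2 ↔ P3) := fun h4 =>
    hP2.trans <| (sum_pow_four_eq_iff_eq_add (hP4.1 h4) hs hc).trans hP3.symm
  have h3 : P3 := by
    rcases h with ⟨h1, h2⟩ | ⟨-, h3⟩ | ⟨h1, h4⟩ | ⟨-, h3⟩ | ⟨h2, h4⟩ | ⟨h3, -⟩
    exacts [h12_3 h1 h2, h3, (h4_13 h4).1 h1, h3, (h4_23 h4).1 h2, h3]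
  have h4 : P4 := by
    rcases h with ⟨h1, -⟩ | ⟨h1, -⟩ | ⟨-, h4⟩ | ⟨h2, -⟩ | ⟨-, h4⟩ | ⟨-, h4⟩
    exacts [(h3_14 h3).1 h1, (h3_14 h3).1 h1, h4, (h3_24 h3).1 h2, h4, h4]
  exact ⟨(h3_14 h3).2 h4, (h3_24 h3).2 h4, h3, h4⟩
end

section
/- Define A = {q ∈ ℚ : ∃ t ∈ ℤ, q = (2t²−22t−13)/(14(t²+t+1)) or q = −(2t²−22t−13)/(14(t²+t+1))}, B = {q ∈ ℚ : ∃ t ∈ ℤ, q = (−13t²−4t+11)/(14(t²+t+1)) or q = −(−13t²−4t+11)/(14(t²+t+1))}, and C = {q ∈ ℚ : ∃ t ∈ ℤ, q = (11t²+26t+2)/(14(t²+t+1)) or q = −(11t²+26t+2)/(14(t²+t+1))}. Then the intersections A ∩ B, B ∩ C, and C ∩ A are all finite sets. -/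
/-- Points of a parametrized family (with negatives) that stay far from the two limit
points `±L` come from a bounded set of parameters, hence form a finite set. -/
lemma far_finite (f : ℤ → ℚ) (L : ℚ)
    (h : ∀ t : ℤ, 30 ≤ |t| → |f t - L| ≤ 1/15) :
    ({q : ℚ | ∃ t : ℤ, q = f t ∨ q = -(f t)} ∩
      {q : ℚ | 1/15 < |q - L| ∧ 1/15 < |q + L|}).Finite := by
  apply Set.Finite.subset (((Set.finite_Icc (-29:ℤ) 29).image f).union
    ((Set.finite_Icc (-29:ℤ) 29).image (fun t => -(f t))))
  rintro q ⟨⟨t, ht | ht⟩, hq1, hq2⟩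
  · left
    refine ⟨t, ?_, ht.symm⟩
    simp only [Set.mem_Icc]
    by_contra hc
    have habs : 30 ≤ |t| := by
      rcases abs_cases t with ⟨h1, h2⟩ | ⟨h1, h2⟩ <;> omega
    have := h t habs
    rw [← ht] at this
    linarith
  · right
    refine ⟨t, ?_, ht.symm⟩
    simp only [Set.mem_Icc]
    by_contra hc
    have habs : 30 ≤ |t| := by
      rcases abs_cases t with ⟨h1, h2⟩ | ⟨h1, h2⟩ <;> omega
    have h1 := h t habs
    have h2 : |q + L| = |f t - L| := by
      rw [ht, show -(f t) + L = -(f t - L) by ring, abs_neg]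
    rw [h2] at hq2
    linarith

/-- If `q` is close to `±Lf` and the limit points of the two families are separated,
then `q` is far from `±Lg`. -/
lemma sep_helper (q Lf Lg : ℚ)
    (h1 : |q - Lf| ≤ 1/15 ∨ |q + Lf| ≤ 1/15)
    (sep1 : 2/15 < |Lf - Lg|) (sep2 : 2/15 < |Lf + Lg|) :
    1/15 < |q - Lg| ∧ 1/15 < |q + Lg| := by
  rw [lt_abs] at sep1 sep2
  constructor
  · by_contra hc
    push_neg at hc
    rcases h1 with h | h <;> rw [abs_le] at h hc <;>
      rcases sep1 with s | s <;> rcases sep2 with s2 | s2 <;> linarith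
  · by_contra hc
    push_neg at hc
    rcases h1 with h | h <;> rw [abs_le] at h hc <;>
      rcases sep1 with s | s <;> rcases sep2 with s2 | s2 <;> linarith

/-- Two parametrized families (with negatives) whose limit points are separated have
finite intersection. -/
lemma pair_finite (f g : ℤ → ℚ) (Lf Lg : ℚ)
    (hf : ∀ t : ℤ, 30 ≤ |t| → |f t - Lf| ≤ 1/15)
    (hg : ∀ t : ℤ, 30 ≤ |t| → |g t - Lg| ≤ 1/15)
    (sep1 : 2/15 < |Lf - Lg|) (sep2 : 2/15 < |Lf + Lg|) :
    ({q : ℚ | ∃ t : ℤ, q = f t ∨ q = -(f t)} ∩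
     {q : ℚ | ∃ t : ℤ, q = g t ∨ q = -(g t)}).Finite := by
  apply Set.Finite.subset ((far_finite f Lf hf).union (far_finite g Lg hg))
  rintro q ⟨hqf, hqg⟩
  by_cases hfar : 1/15 < |q - Lf| ∧ 1/15 < |q + Lf|
  · exact Or.inl ⟨hqf, hfar⟩
  · rw [not_and_or, not_lt, not_lt] at hfar
    exact Or.inr ⟨hqg, sep_helper q Lf Lg hfar sep1 sep2⟩

lemma tailA : ∀ t : ℤ, 30 ≤ |t| →
    |(2 * (t : ℚ) ^ 2 - 22 * t - 13) / (14 * ((t : ℚ) ^ 2 + t + 1)) - 1/7| ≤ 1/15 := by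
  intro t ht
  have hx : (30:ℚ) ≤ |(t:ℚ)| := by rw [← Int.cast_abs]; exact_mod_cast ht
  set x : ℚ := (t:ℚ) with hxdef
  have hd : (0:ℚ) < x^2 + x + 1 := by nlinarith [sq_nonneg (x + 1/2)]
  have hd14 : (0:ℚ) < 14*(x^2+x+1) := by linarith
  have key : (2*x^2 - 22*x - 13)/(14*(x^2+x+1)) - 1/7 = (-24*x - 15)/(14*(x^2+x+1)) := by
    rw [eq_div_iff hd14.ne', sub_mul, div_mul_cancel₀ _ hd14.ne']; ring
  rw [key, abs_div, abs_of_pos hd14, div_le_iff₀ hd14]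
  have h1 : -|x| ≤ x := neg_abs_le x
  have h2 : x ≤ |x| := le_abs_self x
  have h3 : x^2 = |x|^2 := (sq_abs x).symm
  rcases abs_cases (-24*x - 15) with ⟨he, _⟩ | ⟨he, _⟩ <;> rw [he] <;> nlinarith

lemma tailB : ∀ t : ℤ, 30 ≤ |t| →
    |(-13 * (t : ℚ) ^ 2 - 4 * t + 11) / (14 * ((t : ℚ) ^ 2 + t + 1)) - (-13/14)| ≤ 1/15 := by
  intro t ht
  have hx : (30:ℚ) ≤ |(t:ℚ)| := by rw [← Int.cast_abs]; exact_mod_cast ht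
  set x : ℚ := (t:ℚ) with hxdef
  have hd : (0:ℚ) < x^2 + x + 1 := by nlinarith [sq_nonneg (x + 1/2)]
  have hd14 : (0:ℚ) < 14*(x^2+x+1) := by linarith
  have key : (-13*x^2 - 4*x + 11)/(14*(x^2+x+1)) - (-13/14) = (9*x + 24)/(14*(x^2+x+1)) := by
    rw [eq_div_iff hd14.ne', sub_mul, div_mul_cancel₀ _ hd14.ne']; ring
  rw [key, abs_div, abs_of_pos hd14, div_le_iff₀ hd14]
  have h1 : -|x| ≤ x := neg_abs_le x
  have h2 : x ≤ |x| := le_abs_self x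
  have h3 : x^2 = |x|^2 := (sq_abs x).symm
  rcases abs_cases (9*x + 24) with ⟨he, _⟩ | ⟨he, _⟩ <;> rw [he] <;> nlinarith

lemma tailC : ∀ t : ℤ, 30 ≤ |t| →
    |(11 * (t : ℚ) ^ 2 + 26 * t + 2) / (14 * ((t : ℚ) ^ 2 + t + 1)) - 11/14| ≤ 1/15 := by
  intro t ht
  have hx : (30:ℚ) ≤ |(t:ℚ)| := by rw [← Int.cast_abs]; exact_mod_cast ht
  set x : ℚ := (t:ℚ) with hxdef
  have hd : (0:ℚ) < x^2 + x + 1 := by nlinarith [sq_nonneg (x + 1/2)]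
  have hd14 : (0:ℚ) < 14*(x^2+x+1) := by linarith
  have key : (11*x^2 + 26*x + 2)/(14*(x^2+x+1)) - 11/14 = (15*x - 9)/(14*(x^2+x+1)) := by
    rw [eq_div_iff hd14.ne', sub_mul, div_mul_cancel₀ _ hd14.ne']; ring
  rw [key, abs_div, abs_of_pos hd14, div_le_iff₀ hd14]
  have h1 : -|x| ≤ x := neg_abs_le x
  have h2 : x ≤ |x| := le_abs_self x
  have h3 : x^2 = |x|^2 := (sq_abs x).symm
  rcases abs_cases (15*x - 9) with ⟨he, _⟩ | ⟨he, _⟩ <;> rw [he] <;> nlinarith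

/-- Lemma 6.3: the pairwise intersections of the three parametrized families of rationals
(together with their negatives) are finite. -/
theorem stmt_14
    (A B C : Set ℚ)
    (hA : A = {q : ℚ | ∃ t : ℤ,
      q = (2 * (t : ℚ) ^ 2 - 22 * t - 13) / (14 * ((t : ℚ) ^ 2 + t + 1)) ∨
      q = -((2 * (t : ℚ) ^ 2 - 22 * t - 13) / (14 * ((t : ℚ) ^ 2 + t + 1)))})
    (hB : B = {q : ℚ | ∃ t : ℤ,
      q = (-13 * (t : ℚ) ^ 2 - 4 * t + 11) / (14 * ((t : ℚ) ^ 2 + t + 1)) ∨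
      q = -((-13 * (t : ℚ) ^ 2 - 4 * t + 11) / (14 * ((t : ℚ) ^ 2 + t + 1)))})
    (hC : C = {q : ℚ | ∃ t : ℤ,
      q = (11 * (t : ℚ) ^ 2 + 26 * t + 2) / (14 * ((t : ℚ) ^ 2 + t + 1)) ∨
      q = -((11 * (t : ℚ) ^ 2 + 26 * t + 2) / (14 * ((t : ℚ) ^ 2 + t + 1)))}) :
    (A ∩ B).Finite ∧ (B ∩ C).Finite ∧ (C ∩ A).Finite := by
  subst hA hB hC
  refine ⟨?_, ?_, ?_⟩
  · exact pair_finite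
      (fun t => (2 * (t : ℚ) ^ 2 - 22 * t - 13) / (14 * ((t : ℚ) ^ 2 + t + 1)))
      (fun t => (-13 * (t : ℚ) ^ 2 - 4 * t + 11) / (14 * ((t : ℚ) ^ 2 + t + 1)))
      (1/7) (-13/14) tailA tailB
      (by rw [lt_abs]; norm_num) (by rw [lt_abs]; norm_num)
  · exact pair_finite
      (fun t => (-13 * (t : ℚ) ^ 2 - 4 * t + 11) / (14 * ((t : ℚ) ^ 2 + t + 1)))
      (fun t => (11 * (t : ℚ) ^ 2 + 26 * t + 2) / (14 * ((t : ℚ) ^ 2 + t + 1)))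
      (-13/14) (11/14) tailB tailC
      (by rw [lt_abs]; norm_num) (by rw [lt_abs]; norm_num)
  · exact pair_finite
      (fun t => (11 * (t : ℚ) ^ 2 + 26 * t + 2) / (14 * ((t : ℚ) ^ 2 + t + 1)))
      (fun t => (2 * (t : ℚ) ^ 2 - 22 * t - 13) / (14 * ((t : ℚ) ^ 2 + t + 1)))
      (11/14) (1/7) tailC tailA
      (by rw [lt_abs]; norm_num) (by rw [lt_abs]; norm_num)
end

section
/- Let β be an integer with 1 ≤ β ≤ 4, let B and D be odd integers with gcd(B, D) = 1, and let R be the smallest positive integer such that D·R ≡ 2^{4−β}·B (mod 16). Let N be an integer with 1 ≤ N ≤ 15 and N < R. Then there do not exist rational numbers x₁, …, x_N with x₁⁴ + x₂⁴ + ⋯ + x_N⁴ = B/(2^β D). -/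
lemma odd_pow4_zmod16 (a : ℤ) (h : Odd a) : ((a : ZMod 16)) ^ 4 = 1 := by
  obtain ⟨k, rfl⟩ := h
  push_cast
  have H : ∀ z : ZMod 16, (2 * z + 1) ^ 4 = 1 := by decide
  exact H _

lemma even_pow4_zmod16 (a : ℤ) (h : Even a) : ((a : ZMod 16)) ^ 4 = 0 := by
  obtain ⟨k, rfl⟩ := h
  push_cast
  have H : ∀ z : ZMod 16, (z + z) ^ 4 = 0 := by decide
  exact H _

/-- Lemma 6.6: congruence-based nonexistence for the quartic Hilbert-Kamke equation
`x₁⁴ + ⋯ + x_N⁴ = B/(2^β D)`, when `1 ≤ N ≤ 15` and `N < R`, where `R` is the smallest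
positive integer with `D·R ≡ 2^{4−β}·B (mod 16)`. -/
theorem stmt_15 (β : ℕ) (hβ1 : 1 ≤ β) (hβ4 : β ≤ 4)
    (B D : ℤ) (hB : Odd B) (hD : Odd D) (hBD : Int.gcd B D = 1)
    (R : ℤ) (hR0 : 0 < R)
    (hRmod : D * R ≡ 2 ^ (4 - β) * B [ZMOD 16])
    (hRmin : ∀ R' : ℤ, 0 < R' → D * R' ≡ 2 ^ (4 - β) * B [ZMOD 16] → R ≤ R')
    (N : ℕ) (hN1 : 1 ≤ N) (hN15 : N ≤ 15) (hNR : (N : ℤ) < R) :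
    ¬ ∃ x : Fin N → ℚ, ∑ i, (x i) ^ 4 = (B : ℚ) / (2 ^ β * D) := by
  have hDne : D ≠ 0 := by rintro rfl; simp at hD
  have hD0 : (D : ℚ) ≠ 0 := by exact_mod_cast hDne
  -- Main integer lemma, by strong induction (infinite descent) on the denominator.
  have key : ∀ d : ℕ, 0 < d → ∀ a : Fin N → ℤ,
      2 ^ β * D * (∑ i, (a i) ^ 4) ≠ B * (d : ℤ) ^ 4 := by
    intro d
    induction d using Nat.strong_induction_on with
    | _ d ih =>
      intro hd a heq
      -- d must be even
      have hdeven : Even d := by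
        have h1 : Even (2 ^ β * D * (∑ i, (a i) ^ 4)) := by
          have h2 : Even ((2 : ℤ) ^ β) := Int.even_pow.mpr ⟨even_two, by omega⟩
          exact (h2.mul_right D).mul_right _
        rw [heq] at h1
        rcases Int.even_mul.mp h1 with h | h
        · exact absurd h (Int.not_even_iff_odd.mpr hB)
        · have h3 : Even ((d : ℤ)) := (Int.even_pow.mp h).1
          exact_mod_cast h3
      obtain ⟨e, hde⟩ := hdeven
      have he0 : 0 < e := by omega
      have helt : e < d := by omega
      have heq' : 2 ^ β * D * (∑ i, (a i) ^ 4) = 16 * (B * (e : ℤ) ^ 4) := by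
        rw [heq]
        have hcast : (d : ℤ) = 2 * (e : ℤ) := by omega
        rw [hcast]; ring
      by_cases hall : ∀ i, Even (a i)
      · -- descent case
        choose b hb using fun i => hall i
        have hsum : (∑ i, (a i) ^ 4) = 16 * ∑ i, (b i) ^ 4 := by
          rw [Finset.mul_sum]
          refine Finset.sum_congr rfl fun i _ => ?_
          rw [hb i]; ring
        refine ih e helt he0 b ?_
        have h16 : (16 : ℤ) ≠ 0 := by norm_num
        apply mul_left_cancel₀ h16
        calc 16 * (2 ^ β * D * ∑ i, (b i) ^ 4)
            = 2 ^ β * D * (16 * ∑ i, (b i) ^ 4) := by ring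
          _ = 2 ^ β * D * (∑ i, (a i) ^ 4) := by rw [hsum]
          _ = 16 * (B * (e : ℤ) ^ 4) := heq'
      · -- congruence case
        push_neg at hall
        obtain ⟨i₀, hi₀⟩ := hall
        set m : ℕ := (Finset.univ.filter fun i => Odd (a i)).card with hm
        have hm1 : 1 ≤ m := by
          refine Finset.card_pos.mpr ⟨i₀, ?_⟩
          simp [Int.not_even_iff_odd.mp hi₀]
        have hmN : m ≤ N := by
          simpa using Finset.card_filter_le Finset.univ fun i => Odd (a i)
        -- sum of fourth powers mod 16 equals m
        have hSm : (((∑ i, (a i) ^ 4 : ℤ) : ZMod 16)) = (m : ZMod 16) := by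
          push_cast
          rw [show (∑ i, ((a i : ZMod 16)) ^ 4)
              = ∑ i, (if Odd (a i) then (1 : ZMod 16) else 0) from
            Finset.sum_congr rfl fun i _ => by
              by_cases h : Odd (a i)
              · simp [h, odd_pow4_zmod16 _ h]
              · simp [h, even_pow4_zmod16 _ (Int.not_odd_iff_even.mp h)]]
          rw [Finset.sum_boole]
        -- divide the equation by 2^β
        have heq2 : D * (∑ i, (a i) ^ 4) = 2 ^ (4 - β) * (B * (e : ℤ) ^ 4) := by
          have hpow : (16 : ℤ) = 2 ^ β * 2 ^ (4 - β) := by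
            rw [← pow_add]
            have h4 : β + (4 - β) = 4 := by omega
            rw [h4]; norm_num
          have h2 : ((2 : ℤ) ^ β) ≠ 0 := by positivity
          apply mul_left_cancel₀ h2
          calc 2 ^ β * (D * (∑ i, (a i) ^ 4)) = 2 ^ β * D * (∑ i, (a i) ^ 4) := by ring
            _ = 16 * (B * (e : ℤ) ^ 4) := heq'
            _ = 2 ^ β * (2 ^ (4 - β) * (B * (e : ℤ) ^ 4)) := by rw [hpow]; ring
        -- cast to ZMod 16
        have hz : (D : ZMod 16) * (m : ZMod 16)
            = (2 : ZMod 16) ^ (4 - β) * (B : ZMod 16) * (((e : ℤ) : ZMod 16)) ^ 4 := by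
          calc (D : ZMod 16) * (m : ZMod 16)
              = ((D * (∑ i, (a i) ^ 4) : ℤ) : ZMod 16) := by rw [Int.cast_mul, hSm]
            _ = ((2 ^ (4 - β) * (B * (e : ℤ) ^ 4) : ℤ) : ZMod 16) := by rw [heq2]
            _ = (2 : ZMod 16) ^ (4 - β) * (B : ZMod 16) * (((e : ℤ) : ZMod 16)) ^ 4 := by
                push_cast; ring
        rcases Int.even_or_odd (e : ℤ) with he | he
        · -- e even: then m ≡ 0 mod 16, impossible
          rw [even_pow4_zmod16 _ he, mul_zero] at hz
          have hz0 : ((D * (m : ℤ) : ℤ) : ZMod 16) = 0 := by push_cast; exact hz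
          have hdvd : (16 : ℤ) ∣ D * (m : ℤ) :=
            (ZMod.intCast_zmod_eq_zero_iff_dvd _ 16).mp hz0
          have hcop : IsCoprime (2 : ℤ) D := by
            refine (Int.prime_two.coprime_iff_not_dvd).mpr ?_
            rw [Int.two_dvd_ne_zero]
            exact Int.odd_iff.mp hD
          have hcop16 : IsCoprime (16 : ℤ) D := by
            have h4 : IsCoprime ((2 : ℤ) ^ 4) D := hcop.pow_left
            norm_num at h4
            exact h4
          have hdm : (16 : ℤ) ∣ (m : ℤ) :=
            hcop16.dvd_of_dvd_mul_right (by rwa [mul_comm] at hdvd)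
          have h16m : (16 : ℤ) ≤ (m : ℤ) := Int.le_of_dvd (by exact_mod_cast hm1) hdm
          omega
        · -- e odd: get the congruence D m ≡ 2^(4-β) B mod 16
          rw [odd_pow4_zmod16 _ he, mul_one] at hz
          have hmod : D * (m : ℤ) ≡ 2 ^ (4 - β) * B [ZMOD 16] := by
            rw [show (16 : ℤ) = ((16 : ℕ) : ℤ) by norm_num,
              ← ZMod.intCast_eq_intCast_iff]
            push_cast
            linear_combination hz
          have hR1 := hRmin (m : ℤ) (by exact_mod_cast hm1) hmod
          have hR2 : (m : ℤ) ≤ N := by exact_mod_cast hmN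
          omega
  -- Reduce the rational equation to an integer one.
  rintro ⟨x, hx⟩
  set d : ℕ := ∏ i, (x i).den with hd
  have hd0 : 0 < d := Finset.prod_pos fun i _ => (x i).pos
  have ha : ∀ i : Fin N, ∃ a : ℤ, (a : ℚ) = x i * d := by
    intro i
    obtain ⟨c, hc⟩ := Finset.dvd_prod_of_mem (fun i => (x i).den) (Finset.mem_univ i)
    refine ⟨(x i).num * c, ?_⟩
    have hden0 : ((x i).den : ℚ) ≠ 0 := by positivity
    have hcast : (d : ℚ) = ((x i).den : ℚ) * (c : ℚ) := by exact_mod_cast hc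
    rw [hcast]
    nth_rewrite 2 [← Rat.num_div_den (x i)]
    push_cast
    field_simp
  choose a haeq using ha
  apply key d hd0 a
  have hq : (2 : ℚ) ^ β * D * (∑ i, ((a i : ℚ)) ^ 4) = B * (d : ℚ) ^ 4 := by
    have hsum : (∑ i, ((a i : ℚ)) ^ 4) = (∑ i, (x i) ^ 4) * (d : ℚ) ^ 4 := by
      rw [Finset.sum_mul]
      exact Finset.sum_congr rfl fun i _ => by rw [haeq i]; ring
    rw [hsum, hx]
    have h2D : (2 : ℚ) ^ β * D ≠ 0 := mul_ne_zero (by positivity) hD0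
    field_simp
  exact_mod_cast hq
end
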